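/- arXiv:2312.14397 — 6 statements merged into one kernel-verified Lean document; each statement's English description precedes it below -/
import Mathlib

section
/- Let S be a string representing a sock ordering, ≤ a partial order on its alphabet Γ, and a ∈ Γ a letter such that (S, ≤) is a-decided. If the a-reduction of (S, ≤) fails, then (S, ≤) is not foot-sortable. Otherwise, if (S', ≤') is the output of the a-reduction, then (S, ≤) is foot-sortable if and only if (S', ≤') is foot-sortable. -/
open List

universe u

variable {Γ : Type u}

/-- No three letters `a <ℓ b <ℓ c` occur in `S` as a subsequence in the order `b, c, a`. -/
def NoBCA (S : List Γ) (le : Γ → Γ → Prop) : Prop :=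
  ∀ a b c : Γ, le a b → a ≠ b → le b c → b ≠ c → ¬ ([b, c, a] <+ S)

/-- The pair `(S, le)` is foot-sortable: some linear order extending `le` avoids the
`b, c, a` configuration. -/
def PairFootSortable (S : List Γ) (le : Γ → Γ → Prop) : Prop :=
  ∃ le' : Γ → Γ → Prop, IsLinearOrder Γ le' ∧ (∀ x y, le x y → le' x y) ∧ NoBCA S le'

/-- The sock ordering `S` is foot-sortable. -/
def FootSortable (S : List Γ) : Prop :=
  ∃ le : Γ → Γ → Prop, IsLinearOrder Γ le ∧ NoBCA S le

/-- `(S, le)` is `Γ'`-decided. -/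
def DecidedBy (S : List Γ) (le : Γ → Γ → Prop) (Γ' : Set Γ) : Prop :=
  ¬ PairFootSortable S le ∨
    ∃ le' : Γ → Γ → Prop, IsLinearOrder Γ le' ∧ (∀ x y, le x y → le' x y) ∧
      (∃ m ∈ Γ', ∀ x, le' m x) ∧ NoBCA S le'

/-- `le` is a simple partial order with respect to `S`: there is a prefix of `S`
such that `x ≥ y` iff `x = y` or `x y` occurs as a subsequence of the prefix. -/
def SimpleOrder (S : List Γ) (le : Γ → Γ → Prop) : Prop :=
  ∃ k ≤ S.length, ∀ x y : Γ, le y x ↔ (x = y ∨ [x, y] <+ S.take k)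

/-- Index of the second occurrence of `a` in `S` (meaningful when `a` occurs twice). -/
def secondIdx [DecidableEq Γ] (S : List Γ) (a : Γ) : ℕ :=
  S.idxOf a + 1 + (S.drop (S.idxOf a + 1)).idxOf a

/-- The letters of `S` strictly between the first two occurrences of `a`. -/
def betweenFirstTwo [DecidableEq Γ] (S : List Γ) (a : Γ) : List Γ :=
  (S.drop (S.idxOf a + 1)).takeWhile (fun c => c != a)

/-- Every color occurs at most twice. -/
def TwoBounded [DecidableEq Γ] (S : List Γ) : Prop := ∀ x : Γ, S.count x ≤ 2

/-- A minimal non-foot-sortable 2-bounded sock ordering. -/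
def Critical [DecidableEq Γ] (S : List Γ) : Prop :=
  TwoBounded S ∧ ¬ FootSortable S ∧ ∀ i < S.length, FootSortable (S.eraseIdx i)

/-- The tail `a_{n-2} a_{n-1} a_{n-3} a_{n-2} ⋯ a₀ a₁`. -/
def tailPairs (a : ℕ → Γ) (n : ℕ) : List Γ :=
  ((List.range (n - 1)).reverse).flatMap fun i => [a i, a (i + 1)]

/-- Type A: `x a₀ y a_{n-1} x a_{n-2} a_{n-1} ⋯ a₀ a₁`. -/
def typeA (a : ℕ → Γ) (x y : Γ) (n : ℕ) : List Γ :=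
  x :: a 0 :: y :: a (n - 1) :: x :: tailPairs a n

/-- Type B: `a₀ x y a_{n-1} x y a_{n-2} a_{n-1} ⋯ a₀ a₁`. -/
def typeB (a : ℕ → Γ) (x y : Γ) (n : ℕ) : List Γ :=
  a 0 :: x :: y :: a (n - 1) :: x :: y :: tailPairs a n

/-- Type B': `a₀ y x a_{n-1} x y a_{n-2} a_{n-1} ⋯ a₀ a₁`. -/
def typeB' (a : ℕ → Γ) (x y : Γ) (n : ℕ) : List Γ :=
  a 0 :: y :: x :: a (n - 1) :: x :: y :: tailPairs a n

/-- Type C: `a₀ x a_{n-1} y z y x a_{n-2} a_{n-1} ⋯ a₀ a₁`. -/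
def typeC (a : ℕ → Γ) (x y z : Γ) (n : ℕ) : List Γ :=
  a 0 :: x :: a (n - 1) :: y :: z :: y :: x :: tailPairs a n

/-- `S` contains `P` as a pattern. -/
def ContainsPattern {Δ : Type*} (S : List Γ) (P : List Δ) : Prop :=
  ∃ f : Δ → Γ, (∀ i ∈ P, ∀ j ∈ P, f i = f j → i = j) ∧ P.map f <+ S

/-- The 14 sporadic critical sock orderings, with `a,b,c,d,e,f` encoded as `0,…,5`. -/
def sporadicPatterns : List (List ℕ) :=
  [[0,1,2,3,1,0,2,3], [0,1,2,3,4,3,0,1,2],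
   [0,1,2,0,3,1,3,2], [0,1,2,1,3,0,3,2], [0,1,2,3,1,0,3,2], [0,1,2,3,2,0,3,1],
   [0,1,2,3,2,4,0,4,1], [0,1,2,3,4,3,0,2,1],
   [0,1,2,3,1,2,0,3], [0,1,2,3,2,1,0,3], [0,1,2,3,4,3,1,0,2],
   [0,1,2,0,1,3,4,3,2], [0,1,2,3,0,3,4,3,2], [0,1,2,3,2,0,4,5,4,1]]

/-- The forbidden patterns: the 14 sporadic orderings and the four infinite families,
realized over `ℕ` with `aᵢ = i`, `x = n`, `y = n + 1`, `z = n + 2`. -/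
def Forbidden (P : List ℕ) : Prop :=
  P ∈ sporadicPatterns ∨
    (∃ n, 2 ≤ n ∧ P = typeA (fun i => i) n (n + 1) n) ∨
    (∃ n, 3 ≤ n ∧ P = typeB (fun i => i) n (n + 1) n) ∨
    (∃ n, 3 ≤ n ∧ P = typeB' (fun i => i) n (n + 1) n) ∨
    (∃ n, 3 ≤ n ∧ P = typeC (fun i => i) n (n + 1) (n + 2) n)

/-- The relation generated by `le` together with the constraints `c ≤ b` for every
subsequence `b, c, a` of `S` with `b, c ≠ a` (the order produced by the `a`-reduction). -/
def aReduceOrder (S : List Γ) (le : Γ → Γ → Prop) (a : Γ) : Γ → Γ → Prop :=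
  Relation.ReflTransGen fun x y => le x y ∨ (x ≠ a ∧ y ≠ a ∧ [y, x, a] <+ S)

/-- The `a`-reduction succeeds: `a` is minimal with respect to `le` and the generated
relation is antisymmetric (hence a partial order). -/
def aReductionSucceeds (S : List Γ) (le : Γ → Γ → Prop) (a : Γ) : Prop :=
  (∀ x, le x a → x = a) ∧
    ∀ x y, aReduceOrder S le a x y → aReduceOrder S le a y x → x = y

private lemma key_ext {Γ : Type u} (S : List Γ) (le : Γ → Γ → Prop) (a : Γ)
    (le' : Γ → Γ → Prop) (hlin : IsLinearOrder Γ le')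
    (hext : ∀ x y, le x y → le' x y) (hmin : ∀ x, le' a x)
    (hnobca : NoBCA S le') :
    ∀ x y, aReduceOrder S le a x y → le' x y := by
  haveI := hlin
  intro x y h
  induction h with
  | refl => exact refl_of le' x
  | tail _ hstep ih =>
    rename_i b c _
    rcases hstep with h1 | ⟨hb, hc, hsub⟩
    · exact trans_of le' ih (hext _ _ h1)
    · rcases total_of le' b c with h2 | h2
      · exact trans_of le' ih h2
      · by_cases hbc : c = b
        · exact hbc ▸ ih
        · exact absurd hsub (hnobca a c b (hmin c) (Ne.symm hc) h2 hbc)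

/-- If `(S, le)` is `a`-decided, then: if the `a`-reduction fails, `(S, le)` is not
foot-sortable; otherwise `(S, le)` is foot-sortable iff its `a`-reduction is. -/
theorem statement2 {Γ : Type u} [DecidableEq Γ] (S : List Γ) (le : Γ → Γ → Prop)
    (hle : IsPartialOrder Γ le) (a : Γ) (hdec : DecidedBy S le {a}) :
    (¬ aReductionSucceeds S le a → ¬ PairFootSortable S le) ∧
    (aReductionSucceeds S le a →
      (PairFootSortable S le ↔
        PairFootSortable (S.filter (· != a)) (aReduceOrder S le a))) := by
  constructor
  · intro hfail hfoot
    rcases hdec with h | ⟨le', hlin, hext, ⟨m, hm, hmin⟩, hnobca⟩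
    · exact h hfoot
    · have hm' : m = a := hm
      rw [hm'] at hmin
      haveI := hlin
      refine hfail ⟨?_, ?_⟩
      · exact fun x hx => antisymm_of le' (hext _ _ hx) (hmin x)
      · exact fun x y hxy hyx =>
          antisymm_of le' (key_ext S le a le' hlin hext hmin hnobca x y hxy)
            (key_ext S le a le' hlin hext hmin hnobca y x hyx)
  · intro hsucc
    constructor
    · intro hfoot
      rcases hdec with h | ⟨le', hlin, hext, ⟨m, hm, hmin⟩, hnobca⟩
      · exact absurd hfoot h
      · have hm' : m = a := hm
        rw [hm'] at hmin
        exact ⟨le', hlin, key_ext S le a le' hlin hext hmin hnobca,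
          fun p b c h1 h2 h3 h4 hsub =>
            hnobca p b c h1 h2 h3 h4 (hsub.trans filter_sublist)⟩
    · rintro ⟨L, hLlin, hLext, hLnob⟩
      obtain ⟨hmina, _⟩ := hsucc
      haveI := hLlin
      refine ⟨fun x y => x = a ∨ (y ≠ a ∧ L x y), ?_, ?_, ?_⟩
      · refine { refl := ?_, trans := ?_, antisymm := ?_, total := ?_ }
        · intro x
          by_cases hx : x = a
          · exact Or.inl hx
          · exact Or.inr ⟨hx, refl_of L x⟩
        · rintro x y z (hx | ⟨hy, hxy⟩) h2
          · exact Or.inl hx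
          · rcases h2 with hy' | ⟨hz, hyz⟩
            · exact absurd hy' hy
            · exact Or.inr ⟨hz, trans_of L hxy hyz⟩
        · rintro x y (hx | ⟨hy, hxy⟩) (hy' | ⟨hx', hyx⟩)
          · exact hx.trans hy'.symm
          · exact absurd hx hx'
          · exact absurd hy' hy
          · exact antisymm_of L hxy hyx
        · intro x y
          by_cases hx : x = a
          · exact Or.inl (Or.inl hx)
          · by_cases hy : y = a
            · exact Or.inr (Or.inl hy)
            · rcases total_of L x y with h | h
              · exact Or.inl (Or.inr ⟨hy, h⟩)
              · exact Or.inr (Or.inr ⟨hx, h⟩)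
      · intro x y hxy
        by_cases hx : x = a
        · exact Or.inl hx
        · by_cases hy : y = a
          · exact absurd (hmina x (hy ▸ hxy)) hx
          · exact Or.inr ⟨hy, hLext x y (Relation.ReflTransGen.single (Or.inl hxy))⟩
      · intro p b c h1 h2 h3 h4 hsub
        by_cases hb : b = a
        · rcases h1 with hp | ⟨hb', _⟩
          · exact h2 (hp.trans hb.symm)
          · exact hb' hb
        · by_cases hc : c = a
          · rcases h3 with hb' | ⟨hc', _⟩
            · exact hb hb'
            · exact hc' hc
          · rcases h3 with hb' | ⟨_, hLbc⟩
            · exact hb hb'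
            · by_cases hp : p = a
              · have hcb : L c b := hLext c b
                  (Relation.ReflTransGen.single (Or.inr ⟨hc, hb, hp ▸ hsub⟩))
                exact h4 (antisymm_of L hLbc hcb)
              · rcases h1 with hp' | ⟨_, hLpb⟩
                · exact hp hp'
                · have hf : [b, c, p].filter (· != a) = [b, c, p] := by
                    simp [hb, hc, hp]
                  exact hLnob p b c hLpb h2 hLbc h4 (hf ▸ hsub.filter (· != a))
end

section
/- Let S be a reduced string representing a sock ordering and let ≤ be a simple partial order on its alphabet. Let a be the unlonely letter whose second occurrence in S is earliest. If the earliest minimal lonely letter b exists and occurs in S before the first occurrence of a, then (S, ≤) is b-decided. -/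
open List

universe u

variable {Γ : Type u}

section Aux

variable {Γ : Type u}

private lemma aux_getElem_eq {S : List Γ} {i j : ℕ} (h : i = j) (hj : j < S.length) :
    S[i]'(h ▸ hj) = S[j] := by subst h; rfl

private lemma aux_exists_min (lam : Γ → Γ → Prop) (hlin : IsLinearOrder Γ lam) :
    ∀ l : List Γ, l ≠ [] → ∃ m ∈ l, ∀ x ∈ l, lam m x := by
  haveI := hlin
  intro l
  induction l with
  | nil => intro h; exact absurd rfl h
  | cons x xs ih =>
    intro _
    by_cases hxs : xs = []
    · subst hxs
      refine ⟨x, List.mem_cons_self, ?_⟩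
      intro y hy
      rcases List.mem_cons.1 hy with rfl | hy
      · exact refl_of lam y
      · exact absurd hy (List.not_mem_nil)
    · obtain ⟨m, hm, hmin⟩ := ih hxs
      rcases total_of lam x m with h | h
      · refine ⟨x, List.mem_cons_self, ?_⟩
        intro y hy
        rcases List.mem_cons.1 hy with rfl | hy
        · exact refl_of lam y
        · exact trans_of lam h (hmin y hy)
      · refine ⟨m, List.mem_cons_of_mem x hm, ?_⟩
        intro y hy
        rcases List.mem_cons.1 hy with rfl | hy
        · exact h
        · exact hmin y hy

private lemma aux_indexOf_le [DecidableEq Γ] {c : Γ} :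
    ∀ {l : List Γ} {i : ℕ} (h : i < l.length), l[i] = c → l.idxOf c ≤ i := by
  intro l
  induction l with
  | nil => intro i h; simp at h
  | cons x xs ih =>
    intro i h hc
    by_cases hx : x = c
    · rw [List.idxOf_cons_eq _ hx]; omega
    · cases i with
      | zero => simp at hc; exact absurd hc hx
      | succ n =>
        rw [List.idxOf_cons_ne _ hx]
        have := ih (by simpa using h) (by simpa using hc)
        omega

private lemma aux_single {S : List Γ} {m l : ℕ} (hml : m ≤ l) (hl : l < S.length) :
    [S[l]] <+ S.drop m := by
  rw [List.singleton_sublist]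
  have hlen : l - m < (S.drop m).length := by rw [List.length_drop]; omega
  have : (S.drop m)[l - m] = S[l] := by
    rw [List.getElem_drop]
    congr 1
    omega
  exact this ▸ List.getElem_mem hlen

private lemma aux_pair {S : List Γ} {m j l : ℕ} (hmj : m ≤ j) (hjl : j < l)
    (hl : l < S.length) : [S[j], S[l]] <+ S.drop m := by
  have hj : j < S.length := lt_trans hjl hl
  have h1 : [S[j], S[l]] <+ S.drop j := by
    rw [List.drop_eq_getElem_cons hj]
    exact (aux_single (by omega) hl).cons₂ _
  have h2 : S.drop j <+ S.drop m := by
    have h3 : S.drop j = List.drop (j - m) (S.drop m) := by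
      rw [List.drop_drop]; congr 1; omega
    rw [h3]
    exact List.drop_sublist _ _
  exact h1.trans h2

private lemma aux_triple {S : List Γ} {i j l : ℕ} (hij : i < j) (hjl : j < l)
    (hl : l < S.length) : [S[i], S[j], S[l]] <+ S := by
  have hi : i < S.length := by omega
  have h1 : [S[i], S[j], S[l]] <+ S.drop i := by
    rw [List.drop_eq_getElem_cons hi]
    exact (aux_pair (by omega) hjl hl).cons₂ _
  exact h1.trans (List.drop_sublist _ _)

private lemma aux_two_le_count [DecidableEq Γ] {S : List Γ} {c : Γ} {i j : ℕ}
    (hij : i < j) (hj : j < S.length) (hi : S[i]'(lt_trans hij hj) = c) (hjc : S[j] = c) :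
    2 ≤ S.count c := by
  have h1 : c ∈ S.take j := by
    have hlen : i < (S.take j).length := by rw [List.length_take]; omega
    have : (S.take j)[i] = c := by rw [List.getElem_take]; exact hi
    exact this ▸ List.getElem_mem hlen
  have h2 : c ∈ S.drop j := by
    have hlen : 0 < (S.drop j).length := by rw [List.length_drop]; omega
    have : (S.drop j)[0] = c := by rw [List.getElem_drop]; simpa using hjc
    exact this ▸ List.getElem_mem hlen
  have := List.count_append (a := c) (l₁ := S.take j) (l₂ := S.drop j)
  rw [List.take_append_drop] at this
  have c1 : 0 < (S.take j).count c := List.count_pos_iff.mpr h1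
  have c2 : 0 < (S.drop j).count c := List.count_pos_iff.mpr h2
  omega

private lemma aux_secondIdx_le [DecidableEq Γ] {S : List Γ} {c : Γ} {i j : ℕ}
    (hij : i < j) (hj : j < S.length) (hi : S[i]'(lt_trans hij hj) = c) (hjc : S[j] = c) :
    secondIdx S c ≤ j := by
  have hiS : i < S.length := lt_trans hij hj
  have ht : S.idxOf c ≤ i := aux_indexOf_le hiS hi
  have hdrop : j - (S.idxOf c + 1) < (S.drop (S.idxOf c + 1)).length := by
    rw [List.length_drop]; omega
  have hval : (S.drop (S.idxOf c + 1))[j - (S.idxOf c + 1)] = c := by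
    rw [List.getElem_drop]
    have heq : S.idxOf c + 1 + (j - (S.idxOf c + 1)) = j := by omega
    rw [aux_getElem_eq heq hj]
    exact hjc
  have := aux_indexOf_le hdrop hval
  unfold secondIdx
  omega

private lemma aux_secondIdx_spec [DecidableEq Γ] {S : List Γ} {c : Γ}
    (h2 : 2 ≤ S.count c) :
    ∃ h : secondIdx S c < S.length,
      S[secondIdx S c] = c ∧ S.idxOf c < secondIdx S c := by
  have hcS : c ∈ S := List.count_pos_iff.mp (by omega)
  have ht : S.idxOf c < S.length := List.idxOf_lt_length_iff.mpr hcS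
  have hStc : S[S.idxOf c] = c := List.getElem_idxOf ht
  -- c is not in the first `indexOf c` entries
  have hnot : c ∉ S.take (S.idxOf c) := by
    intro hmem
    obtain ⟨i, hilen, hic⟩ := List.mem_iff_getElem.mp hmem
    have hi2 : i < S.length := by
      have := hilen; rw [List.length_take] at this; omega
    have : S[i] = c := by rw [← List.getElem_take (xs := S) (h := hilen)]; exact hic
    have := aux_indexOf_le hi2 this
    have hilt : i < S.idxOf c := by
      have := hilen; rw [List.length_take] at this; omega
    omega
  have hcount1 : (S.take (S.idxOf c + 1)).count c = 1 := by
    rw [List.take_succ, List.count_append]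
    have h0 : (S.take (S.idxOf c)).count c = 0 := List.count_eq_zero.mpr hnot
    have : S[S.idxOf c]? = some c := by
      rw [List.getElem?_eq_getElem ht, hStc]
    rw [h0, this]
    simp
  have hcdrop : 0 < (S.drop (S.idxOf c + 1)).count c := by
    have := List.count_append (a := c) (l₁ := S.take (S.idxOf c + 1)) (l₂ := S.drop (S.idxOf c + 1))
    rw [List.take_append_drop] at this
    omega
  have hmemdrop : c ∈ S.drop (S.idxOf c + 1) := List.count_pos_iff.mp hcdrop
  have hu : (S.drop (S.idxOf c + 1)).idxOf c < (S.drop (S.idxOf c + 1)).length :=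
    List.idxOf_lt_length_iff.mpr hmemdrop
  have hlen : (S.drop (S.idxOf c + 1)).length = S.length - (S.idxOf c + 1) :=
    List.length_drop
  have hslt : secondIdx S c < S.length := by unfold secondIdx; omega
  refine ⟨hslt, ?_, by unfold secondIdx; omega⟩
  have := List.getElem_idxOf hu
  rw [List.getElem_drop] at this
  exact this

private lemma aux_sublist_indices {S : List Γ} {u v w : Γ} (h : [u, v, w] <+ S) :
    ∃ (i j l : ℕ) (hx2ij : i < j) (hx2jl : j < l) (hx2l : l < S.length),
      S[i]'(lt_trans hx2ij (lt_trans hx2jl hx2l)) = u ∧ S[j]'(lt_trans hx2jl hx2l) = v ∧ S[l] = w := by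
  obtain ⟨f, hf⟩ := List.sublist_iff_exists_fin_orderEmbedding_get_eq.mp h
  have hlen : [u, v, w].length = 3 := rfl
  have h0 := hf ⟨0, by simp⟩
  have h1 := hf ⟨1, by simp⟩
  have h2 := hf ⟨2, by simp⟩
  have h01 : f ⟨0, by simp⟩ < f ⟨1, by simp⟩ := f.lt_iff_lt.mpr (by simp [Fin.mk_lt_mk])
  have h12 : f ⟨1, by simp⟩ < f ⟨2, by simp⟩ := f.lt_iff_lt.mpr (by simp [Fin.mk_lt_mk])
  refine ⟨f ⟨0, by simp⟩, f ⟨1, by simp⟩, f ⟨2, by simp⟩, h01, h12,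
    (f ⟨2, by simp⟩).isLt, ?_, ?_, ?_⟩
  · simp only [List.get_eq_getElem] at h0
    exact h0.symm
  · simp only [List.get_eq_getElem] at h1
    exact h1.symm
  · simp only [List.get_eq_getElem] at h2
    exact h2.symm

private lemma aux_main [DecidableEq Γ] {S : List Γ} {le lam : Γ → Γ → Prop}
    (hlin : IsLinearOrder Γ lam)
    (hext : ∀ x y, le x y → lam x y) (hnb : NoBCA S lam)
    (hred : List.Chain' (· ≠ ·) S)
    (hsimp : SimpleOrder S le)
    {a : Γ} (ha : 2 ≤ S.count a)
    (haE : ∀ c : Γ, 2 ≤ S.count c → secondIdx S a ≤ secondIdx S c)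
    {b : Γ} (hb : S.count b = 1)
    (hbE : ∀ c : Γ, S.count c = 1 → (∀ x, le x c → x = c) → S.idxOf b ≤ S.idxOf c)
    (hba : S.idxOf b < S.idxOf a)
    {i j : ℕ} (hij : i < j) (hj : j < S.length) (hjb : j < S.idxOf b)
    {y z : Γ} (hy : S[i]'(lt_trans hij hj) = y) (hz : S[j] = z)
    (hyz : y ≠ z) (hlyz : lam y z) : False := by
  classical
  haveI := hlin
  have hiS : i < S.length := lt_trans hij hj
  have haS : a ∈ S := List.count_pos_iff.mp (by omega)
  have hta : S.idxOf a < S.length := List.idxOf_lt_length_iff.mpr haS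
  have hSta : S[S.idxOf a] = a := List.getElem_idxOf hta
  obtain ⟨hsa_lt, hSsa, hta_sa⟩ := aux_secondIdx_spec ha
  have hyS : y ∈ S := hy ▸ List.getElem_mem hiS
  have hzS : z ∈ S := hz ▸ List.getElem_mem hj
  -- Step 1: every letter with an occurrence after `j`, other than `y`, `z`, is above `y`.
  have step1 : ∀ l (hl : l < S.length), j < l → S[l] ≠ y → S[l] ≠ z → lam y S[l] := by
    intro l hl hjl hne hnez
    rcases total_of lam y S[l] with h | h
    · exact h
    exfalso
    refine hnb S[l] y z h hne hlyz hyz ?_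
    have := aux_triple hij hjl hl
    rwa [hy, hz] at this
  -- generic contradiction for a λ-minimal lonely letter occurring before b
  have blk : ∀ v, v ∈ S → (∀ x ∈ S, lam v x) → S.idxOf v < S.idxOf b →
      S.count v = 1 → False := by
    intro v hvS hvmin hvlt hcv1
    by_cases hm : ∀ x, le x v → x = v
    · have := hbE v hcv1 hm
      omega
    · push_neg at hm
      obtain ⟨x₀, hx₀, hx₀ne⟩ := hm
      obtain ⟨k, _, hiff⟩ := hsimp
      rcases (hiff v x₀).mp hx₀ with h | h
      · exact hx₀ne h.symm
      · have hx₀S : x₀ ∈ S := (List.take_sublist k S).subset (h.subset (by simp))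
        exact hx₀ne (antisymm_of lam (hext _ _ hx₀) (hvmin x₀ hx₀S))
  obtain ⟨mm, hmmS, hmmmin⟩ :=
    aux_exists_min lam hlin S (List.ne_nil_of_length_pos (by omega))
  by_cases hmmy : mm = y
  · subst hmmy
    -- `mm = y` : `y` is the λ-minimum of the letters of `S`
    by_cases hcy : 2 ≤ S.count mm
    · -- y repeated: use the letter after the first occurrence of a
      obtain ⟨hq_lt, hSq, hidxy_q⟩ := aux_secondIdx_spec hcy
      have hya : mm ≠ a := by
        intro h
        subst h
        have := aux_indexOf_le hiS hy
        omega
      have hq_gt_sa : secondIdx S a < secondIdx S mm := by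
        have h1 : secondIdx S a ≤ secondIdx S mm := haE mm hcy
        have h2 : secondIdx S mm ≠ secondIdx S a := by
          intro h
          have hidxeq := aux_getElem_eq h hsa_lt
          exact hya (by rw [← hSq, hidxeq]; exact hSsa)
        omega
      have hta1_lt : S.idxOf a + 1 < S.length := by omega
      have hda : a ≠ S[S.idxOf a + 1] := by
        have hch := List.isChain_iff_getElem.mp hred (S.idxOf a) (by omega)
        simpa [hSta] using hch
      have hsa_ta1 : S.idxOf a + 1 < secondIdx S a := by
        have h2 : secondIdx S a ≠ S.idxOf a + 1 := by
          intro h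
          have hidxeq := aux_getElem_eq h hta1_lt
          exact hda (hSsa.symm.trans hidxeq)
        omega
      have hdy : S[S.idxOf a + 1] ≠ mm := by
        intro h
        have hile : i < S.idxOf a + 1 := by omega
        have := aux_secondIdx_le hile hta1_lt hy h
        omega
      have hpat1 : [a, S[S.idxOf a + 1], mm] <+ S := by
        have := aux_triple (show S.idxOf a < S.idxOf a + 1 by omega)
          (show S.idxOf a + 1 < secondIdx S mm by omega) hq_lt
        rwa [hSta, hSq] at this
      have hpat2 : [S[S.idxOf a + 1], a, mm] <+ S := by
        have := aux_triple hsa_ta1 hq_gt_sa hq_lt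
        rwa [hSsa, hSq] at this
      have hnad : ¬ lam a S[S.idxOf a + 1] := by
        intro h
        exact hnb mm a S[S.idxOf a + 1] (hmmmin a haS) hya h hda hpat1
      have hlda : lam S[S.idxOf a + 1] a :=
        (total_of lam a S[S.idxOf a + 1]).resolve_left hnad
      exact hnb mm S[S.idxOf a + 1] a (hmmmin _ (List.getElem_mem hta1_lt))
        (Ne.symm hdy) hlda (Ne.symm hda) hpat2
    · -- y lonely
      have hc1 : S.count mm = 1 := by
        have : 0 < S.count mm := List.count_pos_iff.mpr hmmS
        omega
      have hidx : S.idxOf mm ≤ i := aux_indexOf_le hiS hy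
      exact blk mm hmmS hmmmin (by omega) hc1
  · by_cases hmmz : mm = z
    · subst hmmz
      exact hyz (antisymm_of lam hlyz (hmmmin y hyS))
    · by_cases hocc : ∃ l, ∃ hl : l < S.length, j < l ∧ S[l] = mm
      · obtain ⟨l, hl, hjl, hSl⟩ := hocc
        refine hmmy (antisymm_of lam (hmmmin y hyS) ?_)
        have := step1 l hl hjl (by rw [hSl]; exact hmmy) (by rw [hSl]; exact hmmz)
        rwa [hSl] at this
      · push_neg at hocc
        have hmmlt : S.idxOf mm < S.length := List.idxOf_lt_length_iff.mpr hmmS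
        have hSmm : S[S.idxOf mm] = mm := List.getElem_idxOf hmmlt
        have hmmidx : S.idxOf mm ≤ j := by
          by_contra hcon
          exact hocc _ hmmlt (by omega) hSmm
        have hcmm1 : S.count mm = 1 := by
          by_contra hcon
          have h2 : 2 ≤ S.count mm := by
            have : 0 < S.count mm := List.count_pos_iff.mpr hmmS
            omega
          obtain ⟨hsmm_lt, hSsmm, hmm_lt⟩ := aux_secondIdx_spec h2
          have hsmmj : secondIdx S mm ≤ j := by
            by_contra hcon2
            exact hocc _ hsmm_lt (by omega) hSsmm
          have := haE mm h2
          omega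
        exact blk mm hmmS hmmmin (by omega) hcmm1

end Aux

/-- Case 1: if the earliest minimal lonely letter `b` occurs before the first occurrence
of the unlonely letter `a` with earliest second occurrence, then `(S, le)` is
`b`-decided. -/
theorem statement5 {Γ : Type u} [DecidableEq Γ] (S : List Γ) (le : Γ → Γ → Prop)
    (hpo : IsPartialOrder Γ le) (hred : List.Chain' (· ≠ ·) S)
    (hsimp : SimpleOrder S le)
    (a : Γ) (ha : 2 ≤ S.count a)
    (haE : ∀ c : Γ, 2 ≤ S.count c → secondIdx S a ≤ secondIdx S c)
    (b : Γ) (hb : S.count b = 1) (hbmin : ∀ x, le x b → x = b)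
    (hbE : ∀ c : Γ, S.count c = 1 → (∀ x, le x c → x = c) → S.idxOf b ≤ S.idxOf c)
    (hba : S.idxOf b < S.idxOf a) :
    DecidedBy S le {b} := by
  classical
  by_cases hfs : PairFootSortable S le
  · right
    obtain ⟨lam, hlin, hext, hnb⟩ := hfs
    haveI := hlin
    refine ⟨fun x y => x = b ∨ (y ≠ b ∧ lam x y), ?_, ?_,
      ⟨b, Set.mem_singleton b, fun x => Or.inl rfl⟩, ?_⟩
    · refine { refl := ?_, trans := ?_, antisymm := ?_, total := ?_ }
      · intro x
        by_cases hx : x = b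
        · exact Or.inl hx
        · exact Or.inr ⟨hx, refl_of lam x⟩
      · intro x y z hxy hyz
        rcases hxy with h | ⟨hyb, hxy'⟩
        · exact Or.inl h
        rcases hyz with h | ⟨hzb, hyz'⟩
        · exact absurd h hyb
        · exact Or.inr ⟨hzb, trans_of lam hxy' hyz'⟩
      · intro x y hxy hyx
        rcases hxy with h | ⟨hyb, hxy'⟩
        · rcases hyx with h' | ⟨hxb, hyx'⟩
          · rw [h, h']
          · exact absurd h hxb
        · rcases hyx with h' | ⟨hxb, hyx'⟩
          · exact absurd h' hyb
          · exact antisymm_of lam hxy' hyx'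
      · intro x y
        by_cases hx : x = b
        · exact Or.inl (Or.inl hx)
        by_cases hy : y = b
        · exact Or.inr (Or.inl hy)
        rcases total_of lam x y with h | h
        · exact Or.inl (Or.inr ⟨hy, h⟩)
        · exact Or.inr (Or.inr ⟨hx, h⟩)
    · intro u v huv
      by_cases hu : u = b
      · exact Or.inl hu
      · refine Or.inr ⟨fun hv => ?_, hext u v huv⟩
        subst hv
        exact hu (hbmin u huv)
    · intro x y z hxy hxny hyz hynz hpat
      by_cases hxb : x = b
      · rw [hxb] at hpat
        have hyb : y ≠ b := fun h => hxny (hxb.trans h.symm)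
        rcases hyz with h | ⟨hzb, hlyz⟩
        · exact hyb h
        obtain ⟨i, j, l, hij, hjl, hl, hyv, hzv, hbv⟩ := aux_sublist_indices hpat
        have hbS : b ∈ S := List.count_pos_iff.mp (by omega)
        have hpblt : S.idxOf b < S.length := List.idxOf_lt_length_iff.mpr hbS
        have hbidx : S.idxOf b ≤ l := aux_indexOf_le hl hbv
        have heq : l = S.idxOf b := by
          by_contra hne
          have hlt : S.idxOf b < l := by omega
          have : 2 ≤ S.count b :=
            aux_two_le_count hlt hl (List.getElem_idxOf hpblt) hbv
          omega
        exact aux_main hlin hext hnb hred hsimp ha haE hb hbE hba hij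
          (lt_trans hjl hl) (by omega) hyv hzv hynz hlyz
      · rcases hxy with h | ⟨hyb, hlxy⟩
        · exact absurd h hxb
        rcases hyz with h | ⟨hzb, hlyz⟩
        · exact absurd h hyb
        exact hnb x y z hlxy hxny hlyz hynz hpat
  · exact Or.inl hfs
end

section
/- Let S be a reduced string representing a sock ordering and let ≤ be a simple partial order on its alphabet. Let a be the unlonely letter whose second occurrence in S is earliest. Suppose no lonely letter that is minimal with respect to ≤ occurs before the second occurrence of a. Then (S, ≤) is a-decided, unless there is exactly one letter z strictly between the first two occurrences of a; in that exceptional case, (S, ≤) is {a, z}-decided. -/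
open List

universe u

variable {Γ : Type u}

lemma socks_sub2 {l : List Γ} {p q : ℕ} {u v : Γ} (hpq : p < q) (hq : q < l.length)
    (hu : l[p]'(hpq.trans hq) = u) (hv : l[q] = v) : [u, v] <+ l := by
  have h1 : [u] <+ l.take q := by
    rw [singleton_sublist, ← hu]
    have hp : p < (l.take q).length := by simp [length_take]; omega
    exact List.getElem_take (h := hp) ▸ List.getElem_mem hp
  have h2 : [v] <+ l.drop q := by
    rw [singleton_sublist, ← hv]
    have h0 : 0 < (l.drop q).length := by simp; omega
    have := List.getElem_drop (i := q) (j := 0) (h := h0)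
    simpa using this ▸ List.getElem_mem h0
  have := h1.append h2
  rwa [take_append_drop] at this

lemma socks_sub3 {l : List Γ} {p q r : ℕ} {u v w : Γ} (hpq : p < q) (hqr : q < r)
    (hr : r < l.length) (hu : l[p]'(hpq.trans (hqr.trans hr)) = u)
    (hv : l[q]'(hqr.trans hr) = v) (hw : l[r] = w) : [u, v, w] <+ l := by
  have h1 : [u] <+ l.take q := by
    rw [singleton_sublist, ← hu]
    have hp : p < (l.take q).length := by simp [length_take]; omega
    exact List.getElem_take (h := hp) ▸ List.getElem_mem hp
  have h2 : [v, w] <+ l.drop q := by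
    have h0 : 0 < (l.drop q).length := by simp; omega
    have hr0 : r - q < (l.drop q).length := by simp; omega
    refine socks_sub2 (p := 0) (q := r - q) (by omega) hr0 ?_ ?_
    · have := List.getElem_drop (i := q) (j := 0) (h := h0)
      simpa [hv] using this
    · rw [List.getElem_drop (i := q) (j := r - q) (h := hr0)]
      convert hw using 2
      omega
  have := h1.append h2
  rwa [take_append_drop] at this

lemma socks_sub2_ex {u v : Γ} : ∀ {l : List Γ}, [u, v] <+ l →
    ∃ p q, ∃ (hq : q < l.length) (hpq : p < q), l[p]'(hpq.trans hq) = u ∧ l[q] = v := by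
  intro l
  induction l with
  | nil => intro h; simp at h
  | cons b t ih =>
    intro h
    cases h with
    | cons _ h' =>
      obtain ⟨p, q, hq, hpq, h1, h2⟩ := ih h'
      exact ⟨p + 1, q + 1, by simpa using Nat.succ_lt_succ hq, Nat.succ_lt_succ hpq,
        by simpa using h1, by simpa using h2⟩
    | cons_cons _ h' =>
      rw [singleton_sublist] at h'
      obtain ⟨n, hn, he⟩ := mem_iff_getElem.1 h'
      exact ⟨0, n + 1, by simpa using Nat.succ_lt_succ hn, Nat.succ_pos n, rfl, by simpa using he⟩

lemma socks_idx_le [DecidableEq Γ] {c : Γ} : ∀ {l : List Γ} {q : ℕ} (hq : q < l.length),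
    l[q] = c → l.idxOf c ≤ q := by
  intro l
  induction l with
  | nil => intro q hq; simp at hq
  | cons b t ih =>
    intro q hq he
    by_cases hb : b = c
    · simp [List.idxOf_cons, hb]
    · cases q with
      | zero => simp at he; exact absurd he hb
      | succ n =>
        have hbc : (b == c) = false := beq_eq_false_iff_ne.mpr hb
        simp only [List.idxOf_cons, hbc, cond_false]
        have := ih (q := n) (by simpa using hq) (by simpa using he)
        omega

lemma socks_cnt2 [DecidableEq Γ] {l : List Γ} {c : Γ} {p q : ℕ} (hpq : p < q)
    (hq : q < l.length) (hp : l[p]'(hpq.trans hq) = c) (hqe : l[q] = c) :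
    2 ≤ l.count c := by
  have h1 : c ∈ l.take q := by
    rw [← hp]
    have hp' : p < (l.take q).length := by simp [length_take]; omega
    exact List.getElem_take (h := hp') ▸ List.getElem_mem hp'
  have h2 : c ∈ l.drop q := by
    rw [← hqe]
    have h0 : 0 < (l.drop q).length := by simp; omega
    have := List.getElem_drop (i := q) (j := 0) (h := h0)
    simpa using this ▸ List.getElem_mem h0
  have := List.count_append (a := c) (l₁ := l.take q) (l₂ := l.drop q)
  rw [take_append_drop] at this
  have c1 : 0 < (l.take q).count c := List.count_pos_iff.2 h1
  have c2 : 0 < (l.drop q).count c := List.count_pos_iff.2 h2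
  omega

lemma socks_listMin (τ : Γ → Γ → Prop) [IsTotal Γ τ] [IsTrans Γ τ] :
    ∀ (l : List Γ), l ≠ [] → ∃ m ∈ l, ∀ x ∈ l, τ m x := by
  intro l
  induction l with
  | nil => simp
  | cons b t ih =>
    intro _
    by_cases ht : t = []
    · subst ht
      refine ⟨b, by simp, ?_⟩
      intro x hx
      simp at hx; subst hx
      exact (Std.Total.total (r := τ) x x).elim id id
    · obtain ⟨m, hm, hmin⟩ := ih ht
      rcases Std.Total.total (r := τ) b m with h | h
      · refine ⟨b, by simp, ?_⟩
        intro x hx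
        rcases mem_cons.1 hx with rfl | hx
        · exact (Std.Total.total (r := τ) x x).elim id id
        · exact IsTrans.trans _ _ _ h (hmin x hx)
      · refine ⟨m, by simp [hm], ?_⟩
        intro x hx
        rcases mem_cons.1 hx with rfl | hx
        · exact h
        · exact hmin x hx

lemma socks_tw [DecidableEq Γ] (a : Γ) : ∀ (l : List Γ),
    l.takeWhile (fun c => c != a) = l.take (l.idxOf a) := by
  intro l
  induction l with
  | nil => simp
  | cons b t ih =>
    by_cases hb : b = a
    · subst hb
      simp [List.takeWhile_cons, List.idxOf_cons]
    · simp [List.takeWhile_cons, List.idxOf_cons, hb, bne_iff_ne, ih]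

lemma socks_moveDown (S : List Γ) (le τ : Γ → Γ → Prop) (m : Γ)
    (hτ : IsLinearOrder Γ τ) (hext : ∀ x y, le x y → τ x y)
    (hmin : ∀ x, le x m → x = m) (hN : NoBCA S τ)
    (hrev : ∀ β γ, τ β γ → β ≠ γ → β ≠ m → γ ≠ m → ¬ ([β, γ, m] <+ S)) :
    ∃ τ' : Γ → Γ → Prop, IsLinearOrder Γ τ' ∧ (∀ x y, le x y → τ' x y) ∧
      (∀ x, τ' m x) ∧ NoBCA S τ' := by
  haveI := hτ
  refine ⟨fun x y => x = m ∨ (y ≠ m ∧ τ x y), ?_, ?_, ?_, ?_⟩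
  · haveI := hτ
    have hrefl : ∀ x : Γ, x = m ∨ (x ≠ m ∧ τ x x) := by
      intro x
      by_cases h : x = m
      · exact Or.inl h
      · exact Or.inr ⟨h, Std.Refl.refl (r := τ) x⟩
    have htrans : ∀ x y z : Γ, (x = m ∨ (y ≠ m ∧ τ x y)) → (y = m ∨ (z ≠ m ∧ τ y z)) →
        (x = m ∨ (z ≠ m ∧ τ x z)) := by
      intro x y z hxy hyz
      rcases hxy with rfl | ⟨hy, hxy⟩
      · exact Or.inl rfl
      · rcases hyz with rfl | ⟨hz, hyz⟩
        · exact absurd rfl hy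
        · exact Or.inr ⟨hz, IsTrans.trans _ _ _ hxy hyz⟩
    have hanti : ∀ x y : Γ, (x = m ∨ (y ≠ m ∧ τ x y)) → (y = m ∨ (x ≠ m ∧ τ y x)) → x = y := by
      intro x y hxy hyx
      rcases hxy with rfl | ⟨hy, hxy⟩
      · rcases hyx with rfl | ⟨hx, _⟩
        · rfl
        · exact absurd rfl hx
      · rcases hyx with rfl | ⟨hx, hyx⟩
        · exact absurd rfl hy
        · exact Std.Antisymm.antisymm _ _ hxy hyx
    have htot : ∀ x y : Γ, (x = m ∨ (y ≠ m ∧ τ x y)) ∨ (y = m ∨ (x ≠ m ∧ τ y x)) := by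
      intro x y
      by_cases hx : x = m
      · exact Or.inl (Or.inl hx)
      · by_cases hy : y = m
        · exact Or.inr (Or.inl hy)
        · rcases Std.Total.total (r := τ) x y with h | h
          · exact Or.inl (Or.inr ⟨hy, h⟩)
          · exact Or.inr (Or.inr ⟨hx, h⟩)
    exact { refl := hrefl, trans := htrans, antisymm := hanti, total := htot }
  · intro x y hxy
    by_cases hx : x = m
    · exact Or.inl hx
    · refine Or.inr ⟨?_, hext _ _ hxy⟩
      intro hy; subst hy; exact hx (hmin x hxy)
  · intro x; exact Or.inl rfl
  · intro α β γ h1 hne1 h2 hne2 hsub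
    rcases h1 with rfl | ⟨hβm, h1⟩
    · rcases h2 with rfl | ⟨hγm, h2⟩
      · exact hne1 rfl
      · exact hrev β γ h2 hne2 (Ne.symm hne1) hγm hsub
    · rcases h2 with rfl | ⟨hγm, h2⟩
      · exact absurd rfl hβm
      · exact hN α β γ h1 hne1 h2 hne2 hsub


/-- Case 2: if no lonely letter minimal with respect to `le` occurs before the second
occurrence of `a`, then `(S, le)` is `a`-decided, unless exactly one letter `z` lies
strictly between the first two occurrences of `a`, in which case `(S, le)` is
`{a, z}`-decided. -/
theorem statement6 {Γ : Type u} [DecidableEq Γ] (S : List Γ) (le : Γ → Γ → Prop)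
    (hpo : IsPartialOrder Γ le) (hred : List.Chain' (· ≠ ·) S)
    (hsimp : SimpleOrder S le)
    (a : Γ) (ha : 2 ≤ S.count a)
    (haE : ∀ c : Γ, 2 ≤ S.count c → secondIdx S a ≤ secondIdx S c)
    (hnl : ∀ c : Γ, S.count c = 1 → (∀ x, le x c → x = c) →
      ¬ (S.idxOf c < secondIdx S a)) :
    ((¬ ∃ z : Γ, betweenFirstTwo S a = [z]) → DecidedBy S le {a}) ∧
    (∀ z : Γ, betweenFirstTwo S a = [z] → DecidedBy S le {a, z}) := by

  classical
  obtain ⟨k, hkle, hiff⟩ := hsimp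
  haveI := hpo
  have hmemA : a ∈ S := by
    by_contra h
    have := List.count_eq_zero_of_not_mem h
    omega
  set i := S.idxOf a with hidef
  have hi : i < S.length := idxOf_lt_length_iff.2 hmemA
  have hSi : S[i] = a := getElem_idxOf hi
  have hmemA2 : a ∈ S.drop (i + 1) := by
    obtain ⟨p, q, hq, hpq, h1, h2⟩ :=
      socks_sub2_ex (duplicate_iff_sublist.1 (duplicate_iff_two_le_count.2 ha))
    have hip : i ≤ p := socks_idx_le _ h1
    have hd : q - (i + 1) < (S.drop (i + 1)).length := by simp; omega
    refine mem_iff_getElem.2 ⟨q - (i + 1), hd, ?_⟩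
    rw [List.getElem_drop]
    convert h2 using 2
    omega
  set j := (S.drop (i + 1)).idxOf a with hjdef
  have hjlen : j < (S.drop (i + 1)).length := idxOf_lt_length_iff.2 hmemA2
  have hdlen : (S.drop (i + 1)).length = S.length - (i + 1) := by simp
  have hs2len : i + 1 + j < S.length := by omega
  have hSs2 : S[i + 1 + j] = a := by
    have h := getElem_idxOf hjlen
    rwa [List.getElem_drop] at h
  have hsec : secondIdx S a = i + 1 + j := rfl
  have hD : ∀ p q (hq : q < S.length) (hpq : p < q), S[p]'(hpq.trans hq) = S[q] →
      i + 1 + j ≤ q := by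
    intro p q hq hpq he
    have hcnt : 2 ≤ S.count (S[q]) := socks_cnt2 hpq hq he rfl
    have h1 := haE _ hcnt
    rw [hsec] at h1
    have hqm : S[q] ∈ S := List.getElem_mem hq
    have hicl : S.idxOf (S[q]) < S.length := idxOf_lt_length_iff.2 hqm
    have hic : S.idxOf (S[q]) ≤ p := socks_idx_le _ he
    have h2 : q - (S.idxOf (S[q]) + 1) < (S.drop (S.idxOf (S[q]) + 1)).length := by
      simp; omega
    have h3 : (S.drop (S.idxOf (S[q]) + 1))[q - (S.idxOf (S[q]) + 1)]'h2 = S[q] := by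
      rw [List.getElem_drop]
      congr 1
      omega
    have h4 := socks_idx_le h2 h3
    simp only [secondIdx] at h1
    omega
  have hU : ∀ c : Γ, c ≠ a → 2 ≤ S.count c →
      ∃ r, ∃ (hr : r < S.length), i + 1 + j < r ∧ S[r] = c := by
    intro c hca hcnt
    obtain ⟨p, q, hq, hpq, h1, h2⟩ :=
      socks_sub2_ex (duplicate_iff_sublist.1 (duplicate_iff_two_le_count.2 hcnt))
    have hle := hD p q hq hpq (h1.trans h2.symm)
    have hne : q ≠ i + 1 + j := by
      intro h
      subst h
      rw [hSs2] at h2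
      exact hca h2.symm
    exact ⟨q, hq, by omega, h2⟩
  have hkl : (S.take k).length = k := by
    rw [length_take]
    omega
  have hj1 : 1 ≤ j := by
    by_contra hj0
    push_neg at hj0
    have hch := List.isChain_iff_getElem.1 hred i (by omega)
    apply hch
    rw [hSi]
    have h1 : S[i + 1]'(by omega) = a := by
      convert hSs2 using 2
      omega
    exact h1.symm
  have hks2 : k ≤ i + 1 + j := by
    by_contra hlt
    push_neg at hlt
    have hi1 : i + 1 < S.length := by omega
    have e0 : (S.take k)[i]'(by rw [hkl]; omega) = a := by rw [List.getElem_take]; exact hSi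
    have e1 : (S.take k)[i + 1]'(by rw [hkl]; omega) = S[i + 1] := List.getElem_take
    have e2 : (S.take k)[i + 1 + j]'(by rw [hkl]; omega) = a := by
      rw [List.getElem_take]; exact hSs2
    have s1 : [a, S[i + 1]] <+ S.take k := socks_sub2 (by omega) (by rw [hkl]; omega) e0 e1
    have s2 : [S[i + 1], a] <+ S.take k := socks_sub2 (by omega) (by rw [hkl]; omega) e1 e2
    have hle1 : le (S[i + 1]) a := (hiff a (S[i + 1])).2 (Or.inr s1)
    have hle2 : le a (S[i + 1]) := (hiff (S[i + 1]) a).2 (Or.inr s2)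
    have heq : a = S[i + 1] := Std.Antisymm.antisymm _ _ hle2 hle1
    have hch := List.isChain_iff_getElem.1 hred i (by omega)
    exact hch (hSi.trans heq)
  have hposlt : ∀ t, t < j → i + 1 + t < S.length := by
    intro t ht
    omega
  have hBdef : betweenFirstTwo S a = (S.drop (i + 1)).take j := by
    unfold betweenFirstTwo
    rw [socks_tw]
  have hBlen : (betweenFirstTwo S a).length = j := by
    rw [hBdef, length_take]
    omega
  have hBmem : ∀ t (ht : t < j), S[i + 1 + t]'(hposlt t ht) ∈ betweenFirstTwo S a := by
    intro t ht
    rw [hBdef]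
    refine mem_iff_getElem.2 ⟨t, by rw [length_take]; omega, ?_⟩
    rw [List.getElem_take, List.getElem_drop]
  have hBget : ∀ b, b ∈ betweenFirstTwo S a →
      ∃ t, ∃ (ht : t < j) (hl : i + 1 + t < S.length), S[i + 1 + t] = b := by
    intro b hb
    rw [hBdef] at hb
    obtain ⟨n, hn, he⟩ := mem_iff_getElem.1 hb
    rw [length_take] at hn
    have hnj : n < j := by omega
    refine ⟨n, hnj, by omega, ?_⟩
    rw [← he, List.getElem_take, List.getElem_drop]
  have hBnea : ∀ b ∈ betweenFirstTwo S a, b ≠ a := by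
    intro b hb hba
    obtain ⟨t, ht, hl, he⟩ := hBget b hb
    have := hD i (i + 1 + t) hl (by omega) (by rw [hSi, he, hba])
    omega
  have hBposmem : ∀ p (hp : p < S.length), i < p → p < i + 1 + j →
      S[p] ∈ betweenFirstTwo S a := by
    intro p hp h1 h2
    have h3 := hBmem (p - (i + 1)) (by omega)
    convert h3 using 2
    omega
  have occ_unique : ∀ c p, S.count c = 1 → ∀ (hp : p < S.length), S[p] = c →
      p = S.idxOf c := by
    intro c p hc hp he
    have h1 : S.idxOf c ≤ p := socks_idx_le hp he
    rcases eq_or_lt_of_le h1 with h | h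
    · exact h.symm
    · have hil : S.idxOf c < S.length := h.trans hp
      have : 2 ≤ S.count c := socks_cnt2 h hp (getElem_idxOf hil) he
      omega
  have hk1S : ∀ (p q : ℕ), p < q → q < k → k - 1 < S.length := by
    intro p q h1 h2; omega
  have hcore : ∀ β, S.count β = 1 → S.idxOf β < i →
      ∃ c, (le c β ∧ c ≠ β) ∧ (∃ (hkl1 : k - 1 < S.length), S[k - 1] = c) ∧
        (c ≠ a → ∃ r, ∃ (hr : r < S.length), i + 1 + j < r ∧ S[r] = c) := by
    intro β hβ1 hβi
    have hβmem : β ∈ S := by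
      rw [← idxOf_lt_length_iff]
      omega
    have hnm : ¬ (∀ x, le x β → x = β) := by
      intro hmin
      exact (hnl β hβ1 hmin) (by rw [hsec]; omega)
    push_neg at hnm
    obtain ⟨x, hxle, hxne⟩ := hnm
    have hsub : [β, x] <+ S.take k := by
      rcases (hiff β x).1 hxle with h | h
      · exact absurd h.symm hxne
      · exact h
    obtain ⟨p, q, hq, hpq, h1, h2⟩ := socks_sub2_ex hsub
    rw [hkl] at hq
    rw [List.getElem_take] at h1
    have hpS : p < S.length := by omega
    have hk1 : k - 1 < S.length := by omega
    have hpidx : p = S.idxOf β := occ_unique β p hβ1 hpS h1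
    refine ⟨S[k - 1], ⟨?_, ?_⟩, ⟨hk1, rfl⟩, ?_⟩
    · have e1 : (S.take k)[p]'(by rw [hkl]; omega) = β := by
        rw [List.getElem_take]; exact h1
      have e2 : (S.take k)[k - 1]'(by rw [hkl]; omega) = S[k - 1] := List.getElem_take
      have hsub2 : [β, S[k - 1]] <+ S.take k := socks_sub2 (by omega) (by rw [hkl]; omega) e1 e2
      exact (hiff β (S[k - 1]'hk1)).2 (Or.inr hsub2)
    · intro hcb
      have : 2 ≤ S.count β := socks_cnt2 (p := p) (q := k - 1) (by omega) hk1 h1 hcb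
      omega
    · intro hca
      have hcmin : ∀ y, le y (S[k - 1]'hk1) → y = S[k - 1]'hk1 := by
        intro y hy
        by_contra hyne
        have hsub3 : [S[k - 1]'hk1, y] <+ S.take k := by
          rcases (hiff (S[k - 1]'hk1) y).1 hy with h | h
          · exact absurd h.symm hyne
          · exact h
        obtain ⟨p', q', hq', hpq', g1, g2⟩ := socks_sub2_ex hsub3
        rw [hkl] at hq'
        rw [List.getElem_take] at g1
        rcases lt_trichotomy p' (k - 1) with h | h | h
        · have := hD p' (k - 1) hk1 h g1
          omega
        · omega
        · omega
      have hc1 : S.count (S[k - 1]'hk1) ≠ 1 := by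
        intro h1c
        apply hnl _ h1c hcmin
        rw [hsec]
        have := socks_idx_le hk1 (rfl : S[k - 1]'hk1 = S[k - 1]'hk1)
        omega
      have hcmem : (S[k - 1]'hk1) ∈ S := List.getElem_mem hk1
      have hcpos : 0 < S.count (S[k - 1]'hk1) := List.count_pos_iff.2 hcmem
      exact hU _ hca (by omega)
  have hi1len : i + 1 < S.length := by omega
  have hgc : ∀ (p q : ℕ) (hp : p < S.length) (hq : q < S.length), p = q →
      S[p] = S[q] := by
    intro p q hp hq h
    subst h
    rfl
  refine ⟨?_, ?_⟩
  · -- Part 1: not exactly one letter between the two occurrences of a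
    intro hnz
    have hj2 : 2 ≤ j := by
      by_contra hlt
      push_neg at hlt
      have hj1' : (betweenFirstTwo S a).length = 1 := by omega
      exact hnz (List.length_eq_one_iff.1 hj1')
    by_cases hPFS : PairFootSortable S le
    · obtain ⟨τ, hlin, hext, hN⟩ := hPFS
      haveI := hlin
      have step1 : ∀ b ∈ betweenFirstTwo S a, τ a b ∧ a ≠ b := by
        intro b hbB
        refine ⟨?_, (hBnea b hbB).symm⟩
        by_contra hnab
        have hbT : b ∈ (betweenFirstTwo S a).filter (fun x => decide (τ x a)) := by
          rw [List.mem_filter]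
          refine ⟨hbB, ?_⟩
          simp only [decide_eq_true_eq]
          rcases Std.Total.total (r := τ) a b with h | h
          · exact absurd h hnab
          · exact h
        obtain ⟨m, hmT, hmmin⟩ := socks_listMin τ _ (List.ne_nil_of_mem hbT)
        rw [List.mem_filter] at hmT
        obtain ⟨hmB, hma'⟩ := hmT
        have hma : τ m a := by simpa using hma'
        have hmnea : m ≠ a := hBnea m hmB
        obtain ⟨t, ht, hl, he⟩ := hBget m hmB
        by_cases hcnt : 2 ≤ S.count m
        · obtain ⟨r, hr, hrgt, hre⟩ := hU m hmnea hcnt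
          have hpick : ∃ t', ∃ (ht' : t' < j), S[i + 1 + t']'(hposlt t' ht') ≠ m := by
            by_cases h01 : S[i + 1 + 0]'(hposlt 0 (by omega)) = m
            · refine ⟨1, by omega, ?_⟩
              intro hh
              have hch := List.isChain_iff_getElem.1 hred (i + 1) (by omega)
              apply hch
              show S[i + 1] = S[i + 1 + 1]
              have e0 : S[i + 1]'(by omega) = S[i + 1 + 0]'(hposlt 0 (by omega)) := by
                congr 1
              rw [e0, h01, hh]
            · exact ⟨0, by omega, h01⟩
          obtain ⟨t', ht', hb'm⟩ := hpick
          have hb'B : S[i + 1 + t']'(hposlt t' ht') ∈ betweenFirstTwo S a := hBmem t' ht'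
          have hb'a : S[i + 1 + t']'(hposlt t' ht') ≠ a := hBnea _ hb'B
          rcases Std.Total.total (r := τ) (S[i + 1 + t']'(hposlt t' ht')) a with hb'le | hb'ge
          · have hb'T : S[i + 1 + t']'(hposlt t' ht') ∈
                (betweenFirstTwo S a).filter (fun x => decide (τ x a)) := by
              rw [List.mem_filter]
              exact ⟨hb'B, by simpa using hb'le⟩
            have hmb' : τ m (S[i + 1 + t']'(hposlt t' ht')) := hmmin _ hb'T
            refine hN m _ a hmb' (fun hh => hb'm hh.symm) hb'le hb'a ?_
            exact socks_sub3 (p := i + 1 + t') (q := i + 1 + j) (r := r)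
              (by omega) (by omega) hr rfl hSs2 hre
          · refine hN m a _ hma hmnea hb'ge (Ne.symm hb'a) ?_
            exact socks_sub3 (p := i) (q := i + 1 + t') (r := r)
              (by omega) (by omega) hr hSi rfl hre
        · have hmmem : m ∈ S := by
            rw [← he]
            exact List.getElem_mem hl
          have hm1 : S.count m = 1 := by
            have := List.count_pos_iff.2 hmmem
            omega
          have hmin' : ¬ (∀ y, le y m → y = m) := by
            intro hmm
            apply hnl m hm1 hmm
            rw [hsec]
            have := socks_idx_le hl he
            omega
          push_neg at hmin'
          obtain ⟨y, hyle, hyne⟩ := hmin'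
          have hsubm : [m, y] <+ S.take k := by
            rcases (hiff m y).1 hyle with h | h
            · exact absurd h.symm hyne
            · exact h
          obtain ⟨p, q, hq', hpq, g1, g2⟩ := socks_sub2_ex hsubm
          rw [hkl] at hq'
          rw [List.getElem_take] at g1
          have hpS : p < S.length := by omega
          have hpidx : p = S.idxOf m := occ_unique m p hm1 hpS g1
          have htidx : i + 1 + t = S.idxOf m := occ_unique m _ hm1 hl he
          have ht1 : t + 1 < j := by omega
          have hdB : S[i + 1 + (t + 1)]'(hposlt (t + 1) ht1) ∈ betweenFirstTwo S a :=
            hBmem (t + 1) ht1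
          have hdm : S[i + 1 + (t + 1)]'(hposlt (t + 1) ht1) ≠ m := by
            intro hdm'
            have := hD (i + 1 + t) (i + 1 + (t + 1)) (hposlt (t + 1) ht1) (by omega)
              (by rw [he, hdm'])
            omega
          have hled : le (S[i + 1 + (t + 1)]'(hposlt (t + 1) ht1)) m := by
            apply (hiff m _).2
            refine Or.inr (socks_sub2 (p := i + 1 + t) (q := i + 1 + (t + 1))
              (by omega) (by rw [hkl]; omega) ?_ ?_)
            · rw [List.getElem_take]
              exact he
            · rw [List.getElem_take]
          have hτdm : τ _ m := hext _ _ hled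
          have hdT : S[i + 1 + (t + 1)]'(hposlt (t + 1) ht1) ∈
              (betweenFirstTwo S a).filter (fun x => decide (τ x a)) := by
            rw [List.mem_filter]
            refine ⟨hdB, ?_⟩
            simp only [decide_eq_true_eq]
            exact IsTrans.trans _ _ _ hτdm hma
          exact hdm (Std.Antisymm.antisymm _ _ hτdm (hmmin _ hdT))
      by_cases hamin : ∀ x, le x a → x = a
      · have step2 : ∀ β γ, τ β γ → β ≠ γ → β ≠ a → γ ≠ a → ¬ ([β, γ, a] <+ S) := by
          intro β γ hβγ hβγne hβa hγa hsub
          have hτβa : τ β a := by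
            rcases Std.Total.total (r := τ) β a with h | h
            · exact h
            · exact absurd hsub (hN a β γ h (Ne.symm hβa) hβγ hβγne)
          have hβmem : β ∈ S := hsub.subset (by simp)
          have hb0B : S[i + 1]'hi1len ∈ betweenFirstTwo S a := hBmem 0 hj1
          have hs1 := step1 _ hb0B
          have hfin : (∃ r, ∃ (hr : r < S.length), i + 1 + j < r ∧ S[r] = β) → False := by
            rintro ⟨r, hr, hrgt, hre⟩
            refine hN β a (S[i + 1]'hi1len) hτβa hβa hs1.1 hs1.2 ?_
            exact socks_sub3 (p := i) (q := i + 1) (r := r) (by omega) (by omega) hr hSi rfl hre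
          by_cases hcnt : 2 ≤ S.count β
          · exact hfin (hU β hβa hcnt)
          · have hβ1 : S.count β = 1 := by
              have := List.count_pos_iff.2 hβmem
              omega
            have hidxl : S.idxOf β < S.length := idxOf_lt_length_iff.2 hβmem
            have hidxe : S[S.idxOf β] = β := getElem_idxOf hidxl
            have hne_i : S.idxOf β ≠ i := by
              intro hh
              have := hgc i (S.idxOf β) hi hidxl hh.symm
              rw [hSi, hidxe] at this
              exact hβa this.symm
            have hne_s2 : S.idxOf β ≠ i + 1 + j := by
              intro hh
              have := hgc (i + 1 + j) (S.idxOf β) hs2len hidxl hh.symm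
              rw [hSs2, hidxe] at this
              exact hβa this.symm
            rcases lt_trichotomy (S.idxOf β) (i + 1 + j) with hlt | heq | hgt
            · rcases lt_or_gt_of_ne hne_i with hlt2 | hgt2
              · obtain ⟨c, ⟨hlec, hcneβ⟩, _, hcocc⟩ := hcore β hβ1 hlt2
                have hτcβ : τ c β := hext _ _ hlec
                have hτca : τ c a := IsTrans.trans _ _ _ hτcβ hτβa
                have hcnea : c ≠ a := by
                  intro hh
                  subst hh
                  exact hβa (Std.Antisymm.antisymm _ _ hτβa hτcβ)
                obtain ⟨r, hr, hrgt, hre⟩ := hcocc hcnea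
                refine hN c a (S[i + 1]'hi1len) hτca hcnea hs1.1 hs1.2 ?_
                exact socks_sub3 (p := i) (q := i + 1) (r := r) (by omega) (by omega) hr
                  hSi rfl hre
              · have hβB : S[S.idxOf β] ∈ betweenFirstTwo S a :=
                  hBposmem _ hidxl (by omega) (by omega)
                rw [hidxe] at hβB
                exact hβa (Std.Antisymm.antisymm _ _ hτβa (step1 _ hβB).1)
            · exact absurd heq hne_s2
            · exact hfin ⟨S.idxOf β, hidxl, hgt, hidxe⟩
        obtain ⟨τ', hτ'lin, hτ'ext, hτ'min, hτ'N⟩ :=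
          socks_moveDown S le τ a hlin hext hamin hN step2
        exact Or.inr ⟨τ', hτ'lin, hτ'ext, ⟨a, rfl, hτ'min⟩, hτ'N⟩
      · exfalso
        push_neg at hamin
        obtain ⟨x, hxle, hxne⟩ := hamin
        have hsubax : [a, x] <+ S.take k := by
          rcases (hiff a x).1 hxle with h | h
          · exact absurd h.symm hxne
          · exact h
        obtain ⟨p, q, hq, hpq, h1, h2⟩ := socks_sub2_ex hsubax
        rw [hkl] at hq
        rw [List.getElem_take] at h1 h2
        have hpS : p < S.length := by omega
        have hqS : q < S.length := by omega
        have hpi : p = i := by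
          have hip : i ≤ p := socks_idx_le hpS h1
          rcases eq_or_lt_of_le hip with h | h
          · exact h.symm
          · exfalso
            have := hD i p hpS h (by rw [hSi, h1])
            omega
        have hxB : S[q] ∈ betweenFirstTwo S a := hBposmem q hqS (by omega) (by omega)
        have hstep := step1 _ hxB
        rw [h2] at hstep
        have hτxa : τ x a := hext x a hxle
        exact hstep.2 (Std.Antisymm.antisymm _ _ hstep.1 hτxa)
    · exact Or.inl hPFS
  · -- Part 2
    intro z hBz
    have hj1' : j = 1 := by
      have hh := hBlen
      rw [hBz] at hh
      simpa using hh.symm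
    have hzB : z ∈ betweenFirstTwo S a := by
      rw [hBz]
      simp
    have hz : S[i + 1]'hi1len = z := by
      have h0 := hBmem 0 hj1
      rw [hBz] at h0
      simp only [List.mem_singleton] at h0
      exact h0
    have hznea : z ≠ a := hBnea z hzB
    have hzmin : ∀ y, le y z → y = z := by
      intro y hy
      by_contra hyne
      have hsub : [z, y] <+ S.take k := by
        rcases (hiff z y).1 hy with h | h
        · exact absurd h.symm hyne
        · exact h
      obtain ⟨p, q, hq, hpq, g1, g2⟩ := socks_sub2_ex hsub
      rw [hkl] at hq
      rw [List.getElem_take] at g1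
      have hpS : p < S.length := by omega
      rcases lt_trichotomy p i with h | h | h
      · have := hD p (i + 1) hi1len (by omega) (by rw [g1, hz])
        omega
      · have := hgc p i hpS hi h
        rw [g1, hSi] at this
        exact hznea this
      · omega
    have hβcase : ∀ β, β ∈ S → β ≠ a → β ≠ z →
        (∃ r, ∃ (hr : r < S.length), i + 1 + j < r ∧ S[r] = β) ∨
          (S.count β = 1 ∧ S.idxOf β < i) := by
      intro β hβmem hβa hβz
      by_cases hcnt : 2 ≤ S.count β
      · exact Or.inl (hU β hβa hcnt)
      · have hβ1 : S.count β = 1 := by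
          have := List.count_pos_iff.2 hβmem
          omega
        have hidxl : S.idxOf β < S.length := idxOf_lt_length_iff.2 hβmem
        have hidxe : S[S.idxOf β] = β := getElem_idxOf hidxl
        have hne_i : S.idxOf β ≠ i := by
          intro hh
          have := hgc i (S.idxOf β) hi hidxl hh.symm
          rw [hSi, hidxe] at this
          exact hβa this.symm
        have hne_i1 : S.idxOf β ≠ i + 1 := by
          intro hh
          have := hgc (i + 1) (S.idxOf β) hi1len hidxl hh.symm
          rw [hz, hidxe] at this
          exact hβz this.symm
        have hne_s2 : S.idxOf β ≠ i + 1 + j := by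
          intro hh
          have := hgc (i + 1 + j) (S.idxOf β) hs2len hidxl hh.symm
          rw [hSs2, hidxe] at this
          exact hβa this.symm
        rcases lt_trichotomy (S.idxOf β) (i + 1 + j) with hlt | heq | hgt
        · have : S.idxOf β < i := by omega
          exact Or.inr ⟨hβ1, this⟩
        · exact absurd heq hne_s2
        · exact Or.inl ⟨S.idxOf β, hidxl, hgt, hidxe⟩
    by_cases hPFS : PairFootSortable S le
    · obtain ⟨τ, hlin, hext, hN⟩ := hPFS
      haveI := hlin
      have hrevZ_of : τ z a → (∀ β γ, τ β γ → β ≠ γ → β ≠ z → γ ≠ z →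
          ¬ ([β, γ, z] <+ S)) := by
        intro hτza β γ hβγ hne hβz hγz hsub
        have hτβz : τ β z := by
          rcases Std.Total.total (r := τ) β z with h | h
          · exact h
          · exact absurd hsub (hN z β γ h (Ne.symm hβz) hβγ hne)
        have hτβa : τ β a := IsTrans.trans _ _ _ hτβz hτza
        have hβnea : β ≠ a := by
          intro hh
          subst hh
          exact hznea (Std.Antisymm.antisymm _ _ hτza hτβz)
        have hβmem : β ∈ S := hsub.subset (by simp)
        rcases hβcase β hβmem hβnea hβz with ⟨r, hr, hrgt, hre⟩ | ⟨h1, h2⟩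
        · exact hN β z a hτβz hβz hτza hznea
            (socks_sub3 (p := i + 1) (q := i + 1 + j) (r := r) (by omega) (by omega) hr
              hz hSs2 hre)
        · obtain ⟨c, ⟨hlec, hcneβ⟩, ⟨hk1l, hk1e⟩, hcocc⟩ := hcore β h1 h2
          have hτcβ : τ c β := hext _ _ hlec
          by_cases hcz : c = z
          · subst hcz
            exact hβz (Std.Antisymm.antisymm _ _ hτβz hτcβ)
          · rcases Std.Total.total (r := τ) c z with h | h
            · have hcnea : c ≠ a := by
                intro hh
                subst hh
                exact hβnea (Std.Antisymm.antisymm _ _ hτβa hτcβ)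
              obtain ⟨r, hr, hrgt, hre⟩ := hcocc hcnea
              exact hN c z a h hcz hτza hznea
                (socks_sub3 (p := i + 1) (q := i + 1 + j) (r := r) (by omega) (by omega)
                  hr hz hSs2 hre)
            · exact hβz (Std.Antisymm.antisymm _ _ hτβz (IsTrans.trans _ _ _ h hτcβ))
      by_cases hamin : ∀ x, le x a → x = a
      · by_cases hrevA : ∀ β γ, τ β γ → β ≠ γ → β ≠ a → γ ≠ a → ¬ ([β, γ, a] <+ S)
        · obtain ⟨τ', h1, h2, h3, h4⟩ := socks_moveDown S le τ a hlin hext hamin hN hrevA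
          exact Or.inr ⟨τ', h1, h2, ⟨a, by simp, h3⟩, h4⟩
        · push_neg at hrevA
          obtain ⟨β₀, γ₀, hbg, hbgne, hb0a, hg0a, hsub0⟩ := hrevA
          have hτβ₀a : τ β₀ a := by
            rcases Std.Total.total (r := τ) β₀ a with h | h
            · exact h
            · exact absurd hsub0 (hN a β₀ γ₀ h (Ne.symm hb0a) hbg hbgne)
          have hβ₀mem : β₀ ∈ S := hsub0.subset (by simp)
          have hτza : τ z a := by
            rcases Std.Total.total (r := τ) z a with h | h
            · exact h
            · exfalso
              have hb0z : β₀ ≠ z := by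
                intro hh
                subst hh
                exact hznea (Std.Antisymm.antisymm _ _ hτβ₀a h)
              rcases hβcase β₀ hβ₀mem hb0a hb0z with ⟨r, hr, hrgt, hre⟩ | ⟨h1, h2⟩
              · exact hN β₀ a z hτβ₀a hb0a h (Ne.symm hznea)
                  (socks_sub3 (p := i) (q := i + 1) (r := r) (by omega) (by omega) hr
                    hSi hz hre)
              · obtain ⟨c, ⟨hlec, hcneβ⟩, _, hcocc⟩ := hcore β₀ h1 h2
                have hτcβ : τ c β₀ := hext _ _ hlec
                have hτca : τ c a := IsTrans.trans _ _ _ hτcβ hτβ₀a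
                have hcnea : c ≠ a := by
                  intro hh
                  subst hh
                  exact hb0a (Std.Antisymm.antisymm _ _ hτβ₀a hτcβ)
                obtain ⟨r, hr, hrgt, hre⟩ := hcocc hcnea
                exact hN c a z hτca hcnea h (Ne.symm hznea)
                  (socks_sub3 (p := i) (q := i + 1) (r := r) (by omega) (by omega) hr
                    hSi hz hre)
          obtain ⟨τ', h1, h2, h3, h4⟩ :=
            socks_moveDown S le τ z hlin hext hzmin hN (hrevZ_of hτza)
          exact Or.inr ⟨τ', h1, h2, ⟨z, by simp, h3⟩, h4⟩
      · push_neg at hamin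
        obtain ⟨x, hxle, hxne⟩ := hamin
        have hsubax : [a, x] <+ S.take k := by
          rcases (hiff a x).1 hxle with h | h
          · exact absurd h.symm hxne
          · exact h
        obtain ⟨p, q, hq, hpq, h1, h2⟩ := socks_sub2_ex hsubax
        rw [hkl] at hq
        rw [List.getElem_take] at h1 h2
        have hpS : p < S.length := by omega
        have hqS : q < S.length := by omega
        have hpi : p = i := by
          have hip : i ≤ p := socks_idx_le hpS h1
          rcases eq_or_lt_of_le hip with h | h
          · exact h.symm
          · exfalso
            have := hD i p hpS h (by rw [hSi, h1])
            omega
        have hqi1 : q = i + 1 := by omega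
        have hxz : x = z := by
          rw [← h2]
          exact (hgc q (i + 1) hqS hi1len hqi1).trans hz
        subst hxz
        have hτza : τ x a := hext _ _ hxle
        obtain ⟨τ', hl1, hl2, hl3, hl4⟩ :=
          socks_moveDown S le τ x hlin hext hzmin hN (hrevZ_of hτza)
        exact Or.inr ⟨τ', hl1, hl2, ⟨x, by simp, hl3⟩, hl4⟩
    · exact Or.inl hPFS
end

section
/- Let S be a reduced string with a simple partial order ≤ on its alphabet, let a be the unlonely letter whose second occurrence is earliest, suppose no lonely letter minimal with respect to ≤ occurs before the second occurrence of a, that exactly one letter z lies strictly between the first two occurrences of a, and that both a and z are minimal with respect to ≤. Let x be the first letter different from a and z occurring after the substring a z a, and suppose x exists. Then: (1) if both a and z occur after x, then (S, ≤) is a-decided when a occurs before z after x, and z-decided when z occurs before a after x; (2) if a does not occur after x then (S, ≤) is a-decided, and if z does not occur after x then (S, ≤) is z-decided. -/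
open List

universe u

variable {Γ : Type u}

section SockHelpers

variable {α : Type*}

lemma peelL {u : α} {l A B : List α} (h : u :: l <+ A ++ B) (hu : u ∉ A) : u :: l <+ B := by
  induction A with
  | nil => simpa using h
  | cons a A ih =>
    rcases (List.sublist_cons_iff.mp h) with h' | ⟨r, hr, hr'⟩
    · exact ih h' (fun hm => hu (List.mem_cons_of_mem _ hm))
    · have he : u = a := (List.cons.injEq .. ▸ hr : _ ∧ _).1
      exact absurd (he ▸ List.mem_cons_self : u ∈ a :: A) hu

lemma peelR {u : α} {l A B : List α} (h : l ++ [u] <+ A ++ B) (hu : u ∉ B) : l ++ [u] <+ A := by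
  have h' : u :: l.reverse <+ B.reverse ++ A.reverse := by
    have := h.reverse
    simpa using this
  have := (peelL h' (by simpa using hu)).reverse
  simpa using this

lemma exists_min_list (le' : α → α → Prop) (hlin : IsLinearOrder α le') (L : List α)
    (hL : L ≠ []) : ∃ m ∈ L, ∀ s ∈ L, le' m s := by
  induction L with
  | nil => exact absurd rfl hL
  | cons a L ih =>
    rcases eq_or_ne L [] with rfl | hne
    · refine ⟨a, List.mem_cons_self, ?_⟩
      rintro s hs
      rcases List.mem_singleton.mp hs with rfl
      exact hlin.refl _
    · obtain ⟨m, hm, hmin⟩ := ih hne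
      rcases hlin.total a m with ham | hma
      · refine ⟨a, List.mem_cons_self, ?_⟩
        rintro s hs
        rcases List.mem_cons.mp hs with rfl | hs
        · exact hlin.refl _
        · exact hlin.trans _ _ _ ham (hmin s hs)
      · refine ⟨m, List.mem_cons_of_mem _ hm, ?_⟩
        rintro s hs
        rcases List.mem_cons.mp hs with rfl | hs
        · exact hma
        · exact hmin s hs

lemma indexOf_lt_sublist {L : List α} [DecidableEq α] {u v : α} (hu : u ∈ L) (hv : v ∈ L)
    (h : L.idxOf u < L.idxOf v) : [u, v] <+ L := by
  induction L with
  | nil => simp at hu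
  | cons a L ih =>
    by_cases hau : a = u
    · subst hau
      have hva : v ≠ a := by
        rintro rfl
        simp [List.idxOf_cons_self] at h
      have hv' : v ∈ L := by
        rcases List.mem_cons.mp hv with rfl | hv'
        · exact absurd rfl hva
        · exact hv'
      exact (List.singleton_sublist.mpr hv').cons₂ a
    · have hva : a ≠ v := by
        rintro rfl
        rw [List.idxOf_cons_self] at h
        omega
      have hu' : u ∈ L := by
        rcases List.mem_cons.mp hu with rfl | h'
        · exact absurd rfl (fun e => hau e)
        · exact h'
      have hv' : v ∈ L := by
        rcases List.mem_cons.mp hv with rfl | h'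
        · exact absurd rfl (fun e => hva e.symm)
        · exact h'
      have h' : L.idxOf u < L.idxOf v := by
        rw [List.idxOf_cons_ne _ (fun e : a = u => hau e), List.idxOf_cons_ne _ hva] at h
        omega
      exact (ih hu' hv' h').cons a

lemma indexOf_append_le [DecidableEq α] (y : α) (A B : List α) :
    (A ++ B).idxOf y ≤ A.length + B.idxOf y := by
  induction A with
  | nil => simp
  | cons a A ih =>
    by_cases hy : a = y
    · subst hy; simp [List.idxOf_cons_self]
    · rw [List.cons_append, List.idxOf_cons_ne _ hy]
      simpa [List.length_cons, Nat.add_right_comm] using Nat.add_le_add_right ih 1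

lemma indexOf_append_first [DecidableEq α] {m : α} {A : List α} (X : List α) (hm : m ∉ A) :
    (A ++ m :: X).idxOf m = A.length := by
  induction A with
  | nil => simp
  | cons a A ih =>
    have ham : a ≠ m := fun e => hm (e ▸ List.mem_cons_self)
    rw [List.cons_append, List.idxOf_cons_ne _ ham,
      ih (fun h => hm (List.mem_cons_of_mem _ h))]
    simp

lemma mem_split_first [DecidableEq α] {m : α} {A : List α} (hm : m ∈ A) :
    ∃ A₁ A₂, A = A₁ ++ m :: A₂ ∧ m ∉ A₁ := by
  induction A with
  | nil => simp at hm
  | cons a A ih =>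
    by_cases ham : a = m
    · exact ⟨[], A, by simp [ham], by simp⟩
    · have hmA : m ∈ A := by
        rcases List.mem_cons.mp hm with rfl | h
        · exact absurd rfl ham
        · exact h
      obtain ⟨A₁, A₂, hA, hm1⟩ := ih hmA
      refine ⟨a :: A₁, A₂, by simp [hA], ?_⟩
      simp only [List.mem_cons, not_or]
      exact ⟨fun e => ham e.symm, hm1⟩

lemma drop_len_append (A : List α) (m : α) (X : List α) :
    (A ++ m :: X).drop (A.length + 1) = X := by
  have h : A ++ m :: X = (A ++ [m]) ++ X := by simp
  rw [h]
  have h2 : A.length + 1 = (A ++ [m]).length := by simp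
  rw [h2, List.drop_left]

def below1 (p : α) (le' : α → α → Prop) (u v : α) : Prop :=
  u = p ∨ (v ≠ p ∧ le' u v)

lemma below1_linear (p : α) {le' : α → α → Prop} (h : IsLinearOrder α le') :
    IsLinearOrder α (below1 p le') := by
  haveI : IsRefl α (below1 p le') := ⟨fun u => by
    by_cases hp : u = p
    · exact Or.inl hp
    · exact Or.inr ⟨hp, h.refl u⟩⟩
  haveI : IsTrans α (below1 p le') := ⟨by
    rintro u v w (rfl | ⟨hvp, huv⟩) hvw
    · exact Or.inl rfl
    · rcases hvw with rfl | ⟨hwp, hvw⟩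
      · exact absurd rfl hvp
      · exact Or.inr ⟨hwp, h.trans _ _ _ huv hvw⟩⟩
  haveI : IsAntisymm α (below1 p le') := ⟨by
    rintro u v (rfl | ⟨hvp, huv⟩) (rfl | ⟨hup, hvu⟩)
    · rfl
    · exact absurd rfl hup
    · exact absurd rfl hvp
    · exact h.antisymm _ _ huv hvu⟩
  haveI : IsTotal α (below1 p le') := ⟨by
    intro u v
    by_cases hup : u = p
    · exact Or.inl (Or.inl hup)
    · by_cases hvp : v = p
      · exact Or.inr (Or.inl hvp)
      · rcases h.total u v with hh | hh
        · exact Or.inl (Or.inr ⟨hvp, hh⟩)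
        · exact Or.inr (Or.inr ⟨hup, hh⟩)⟩
  haveI : IsPreorder α (below1 p le') := {}
  haveI : IsPartialOrder α (below1 p le') := {}
  exact {}

lemma below1_bot (p : α) (le' : α → α → Prop) : ∀ v, below1 p le' p v :=
  fun _ => Or.inl rfl

lemma below1_noBCA {S : List α} {le' : α → α → Prop} {p : α}
    (hno : NoBCA S le') (hmin : ∀ s ∈ S, le' p s) :
    NoBCA S (below1 p le') := by
  rintro w b c hwb hwbne hbc hbcne hsub
  rcases hwb with rfl | ⟨hbp, hwb2⟩
  · rcases hbc with rfl | ⟨hcp, hbc2⟩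
    · exact hwbne rfl
    · exact hno w b c (hmin b (hsub.subset (by simp))) hwbne hbc2 hbcne hsub
  · rcases hbc with rfl | ⟨hcp, hbc2⟩
    · exact absurd rfl hbp
    · exact hno w b c hwb2 hwbne hbc2 hbcne hsub

lemma below2_noBCA {S : List α} {le' : α → α → Prop} {p q : α}
    (hno : NoBCA S le') (hqmin : ∀ s ∈ S, le' q s)
    (Hq : ∀ c, c ≠ p → c ≠ q → ¬ ([q, c, p] <+ S))
    (Hpc : ∀ b c, b ≠ p → b ≠ q → c ≠ p → c ≠ q → le' b c → b ≠ c → ¬ ([b, c, p] <+ S)) :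
    NoBCA S (below1 p (below1 q le')) := by
  rintro w b c hwb hwbne hbc hbcne hsub
  rcases hwb with rfl | ⟨hbp, hwb2⟩
  · rcases hbc with rfl | ⟨hcp, hbc2⟩
    · exact hwbne rfl
    · rcases hbc2 with rfl | ⟨hcq, hbc3⟩
      · exact Hq c hcp (fun e => hbcne e.symm) hsub
      · by_cases hbq : b = q
        · subst hbq; exact Hq c hcp hcq hsub
        · exact Hpc b c (fun e => hwbne e.symm) hbq hcp hcq hbc3 hbcne hsub
  · rcases hwb2 with rfl | ⟨hbq, hwb3⟩
    · rcases hbc with rfl | ⟨hcp, hbc2⟩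
      · exact absurd rfl hbp
      · rcases hbc2 with rfl | ⟨hcq, hbc3⟩
        · exact hwbne rfl
        · exact hno w b c (hqmin b (hsub.subset (by simp))) hwbne hbc3 hbcne hsub
    · rcases hbc with rfl | ⟨hcp, hbc2⟩
      · exact absurd rfl hbp
      · rcases hbc2 with rfl | ⟨hcq, hbc3⟩
        · exact absurd rfl hbq
        · exact hno w b c hwb3 hwbne hbc3 hbcne hsub

end SockHelpers

/-- The exceptional case of Case 2: exactly one letter `z` lies between the first two
occurrences of `a`, both `a` and `z` are minimal, and `x` is the first letter different
from `a, z` after the substring `a z a`.  Then among `a, z`, `(S, le)` is decided by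
whoever appears first after `x`, and by whoever does not appear after `x`. -/
theorem statement7 {Γ : Type u} [DecidableEq Γ] (S : List Γ) (le : Γ → Γ → Prop)
    (hpo : IsPartialOrder Γ le) (hred : List.Chain' (· ≠ ·) S)
    (hsimp : SimpleOrder S le)
    (a : Γ) (ha : 2 ≤ S.count a)
    (haE : ∀ c : Γ, 2 ≤ S.count c → secondIdx S a ≤ secondIdx S c)
    (hnl : ∀ c : Γ, S.count c = 1 → (∀ x, le x c → x = c) →
      ¬ (S.idxOf c < secondIdx S a))
    (z : Γ) (hz : betweenFirstTwo S a = [z])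
    (hamin : ∀ w, le w a → w = a) (hzmin : ∀ w, le w z → w = z)
    (x : Γ) (j : ℕ)
    (hj : j < (S.drop (S.idxOf a + 3)).length)
    (hxj : (S.drop (S.idxOf a + 3)).getD j a = x)
    (hfirst : ∀ i < j, (S.drop (S.idxOf a + 3)).getD i a = a ∨
      (S.drop (S.idxOf a + 3)).getD i a = z)
    (hxa : x ≠ a) (hxz : x ≠ z) :
    ((a ∈ (S.drop (S.idxOf a + 3)).drop (j + 1) ∧
        z ∈ (S.drop (S.idxOf a + 3)).drop (j + 1)) →
      ((((S.drop (S.idxOf a + 3)).drop (j + 1)).idxOf a <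
          (((S.drop (S.idxOf a + 3)).drop (j + 1)).idxOf z) → DecidedBy S le {a}) ∧
       (((S.drop (S.idxOf a + 3)).drop (j + 1)).idxOf z <
          (((S.drop (S.idxOf a + 3)).drop (j + 1)).idxOf a) → DecidedBy S le {z}))) ∧
    (a ∉ (S.drop (S.idxOf a + 3)).drop (j + 1) → DecidedBy S le {a}) ∧
    (z ∉ (S.drop (S.idxOf a + 3)).drop (j + 1) → DecidedBy S le {z}) := by
    classical
  obtain ⟨k, hkS, hle⟩ := hsimp
  set i₀ := S.idxOf a with hi₀def
  have haS : a ∈ S := by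
    have h0 : 0 < S.count a := by omega
    exact List.count_pos_iff.mp h0
  have hi₀ : i₀ < S.length := List.idxOf_lt_length_iff.mpr haS
  have haPfx : a ∉ S.take i₀ := by
    intro h
    obtain ⟨A₁, A₂, hA, h1⟩ := mem_split_first h
    have hlen : A₁.length < i₀ := by
      have hL := congrArg List.length hA
      simp [List.length_take] at hL
      omega
    have hS' : S = A₁ ++ a :: (A₂ ++ S.drop i₀) := by
      conv_lhs => rw [← List.take_append_drop i₀ S, hA]
      simp
    have hidx : S.idxOf a = A₁.length :=
      (congrArg (fun L => List.idxOf a L) hS').trans (indexOf_append_first _ h1)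
    omega
  -- decompose S around the first two occurrences of a
  have hgetA : S[i₀] = a := List.getElem_idxOf hi₀
  have hdropi₀ : S.drop i₀ = a :: S.drop (i₀ + 1) := by
    rw [List.drop_eq_getElem_cons hi₀, hgetA]
  simp only [betweenFirstTwo] at hz
  rw [← hi₀def] at hz
  have hza : z ≠ a := by
    have hmem : z ∈ (S.drop (i₀ + 1)).takeWhile (fun c => c != a) := by
      rw [hz]; simp
    have := List.mem_takeWhile_imp hmem
    simpa using this
  have htake1 : S.take (i₀ + 1) = S.take i₀ ++ [a] := by
    rw [← List.take_concat_get hi₀, hgetA, List.concat_eq_append]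
  have haD : a ∈ S.drop (i₀ + 1) := by
    have hcount : S.count a = (S.take (i₀ + 1)).count a + (S.drop (i₀ + 1)).count a := by
      rw [← List.count_append, List.take_append_drop]
    have h1 : (S.take (i₀ + 1)).count a = 1 := by
      rw [htake1]
      simp [List.count_append, List.count_eq_zero.mpr haPfx]
    have : 0 < (S.drop (i₀ + 1)).count a := by omega
    exact List.count_pos_iff.mp this
  have hdwne : (S.drop (i₀ + 1)).dropWhile (fun c => c != a) ≠ [] := by
    intro hcon
    have h2 : a ∈ (S.drop (i₀ + 1)).takeWhile (fun c => c != a) := by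
      have h3 := List.takeWhile_append_dropWhile (p := fun c => c != a) (l := S.drop (i₀ + 1))
      rw [hcon, List.append_nil] at h3
      rw [h3]
      exact haD
    rw [hz] at h2
    simp at h2
    exact hza h2.symm
  have hD3 : S.drop (i₀ + 1) = z :: a :: S.drop (i₀ + 3) := by
    have hhead : ((S.drop (i₀ + 1)).dropWhile (fun c => c != a)).head hdwne = a := by
      have h5 := List.head_dropWhile_not (fun c => c != a) (l := S.drop (i₀ + 1)) hdwne
      simpa using h5
    have hD : S.drop (i₀ + 1)
        = z :: a :: ((S.drop (i₀ + 1)).dropWhile (fun c => c != a)).tail := by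
      conv_lhs => rw [← List.takeWhile_append_dropWhile (p := fun c => c != a) (l := S.drop (i₀ + 1)),
        hz, ← List.cons_head_tail hdwne, hhead]
      rfl
    have htail : ((S.drop (i₀ + 1)).dropWhile (fun c => c != a)).tail = S.drop (i₀ + 3) := by
      have h5 : (S.drop (i₀ + 1)).drop 2
          = ((S.drop (i₀ + 1)).dropWhile (fun c => c != a)).tail := by
        conv_lhs =>
          rw [hD]
        rfl
      rw [← h5, List.drop_drop]
    rw [hD, htail]
  set T := S.drop (i₀ + 3) with hTdef
  set M := T.take j with hMdef
  set R := T.drop (j + 1) with hRdef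
  have hTj : T[j] = x := by
    rw [← List.getD_eq_getElem T a hj]; exact hxj
  have hTsplit : T = M ++ x :: R := by
    calc T = T.take j ++ T.drop j := (List.take_append_drop j T).symm
    _ = T.take j ++ (T[j] :: T.drop (j + 1)) := by rw [List.drop_eq_getElem_cons hj]
    _ = M ++ x :: R := by rw [hTj, hMdef, hRdef]
  have hS : S = S.take i₀ ++ a :: z :: a :: (M ++ x :: R) := by
    calc S = S.take i₀ ++ S.drop i₀ := (List.take_append_drop i₀ S).symm
    _ = S.take i₀ ++ (a :: z :: a :: T) := by rw [hdropi₀, hD3, hTdef]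
    _ = S.take i₀ ++ a :: z :: a :: (M ++ x :: R) := by rw [hTsplit]
  have hSassoc : S = (S.take i₀ ++ a :: z :: a :: M) ++ (x :: R) := by
    conv_lhs => rw [hS]
    simp
  have hlenP : (S.take i₀).length = i₀ := by
    simp [List.length_take]
    omega
  have hzM : ∀ w ∈ M, w = a ∨ w = z := by
    intro w hw
    rw [hMdef, List.mem_take_iff_getElem] at hw
    obtain ⟨i, hi, hiw⟩ := hw
    have hij : i < j := lt_of_lt_of_le hi (min_le_left _ _)
    have hiT : i < T.length := lt_trans hij hj
    have := hfirst i hij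
    rw [List.getD_eq_getElem T a hiT, hiw] at this
    exact this
  have hblock : ∀ w ∈ a :: z :: a :: M, w = a ∨ w = z := by
    intro w hw
    rcases List.mem_cons.mp hw with rfl | hw
    · exact Or.inl rfl
    rcases List.mem_cons.mp hw with rfl | hw
    · exact Or.inr rfl
    rcases List.mem_cons.mp hw with rfl | hw
    · exact Or.inl rfl
    exact hzM w hw
  have hzS : z ∈ S := by rw [hS]; simp
  have hxS : x ∈ S := by rw [hS]; simp
  have hsecondA : secondIdx S a = i₀ + 2 := by
    unfold secondIdx
    rw [← hi₀def, hD3, List.idxOf_cons_ne _ hza, List.idxOf_cons_self]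
  have hzP : z ∉ S.take i₀ := by
    intro hzp
    obtain ⟨A₁, A₂, hA, h1⟩ := mem_split_first hzp
    have hS2 : S = A₁ ++ z :: (A₂ ++ a :: z :: a :: (M ++ x :: R)) := by
      conv_lhs => rw [hS, hA]
      simp
    have hidx : S.idxOf z = A₁.length :=
      (congrArg (fun L => List.idxOf z L) hS2).trans (indexOf_append_first _ h1)
    have hdropz : S.drop (A₁.length + 1) = A₂ ++ a :: z :: a :: (M ++ x :: R) := by
      conv_lhs => rw [hS2]
      exact drop_len_append _ _ _
    have hb1 : (A₂ ++ a :: z :: a :: (M ++ x :: R)).idxOf z ≤ A₂.length + 1 := by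
      have h5 := indexOf_append_le z A₂ (a :: z :: a :: (M ++ x :: R))
      rw [List.idxOf_cons_ne _ (fun e => hza e.symm), List.idxOf_cons_self] at h5
      exact h5
    have hcz : 2 ≤ S.count z := by
      have h6 : 0 < (A₂ ++ a :: z :: a :: (M ++ x :: R)).count z :=
        List.count_pos_iff.mpr (by simp)
      have h7 : S.count z
          = A₁.count z + ((A₂ ++ a :: z :: a :: (M ++ x :: R)).count z + 1) := by
        conv_lhs => rw [hS2]
        rw [List.count_append, List.count_cons_self]
      omega
    have hsz := haE z hcz
    have hlenA : A₁.length + 1 + A₂.length = i₀ := by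
      have hL := congrArg List.length hA
      simp at hL
      omega
    have hszle : secondIdx S z ≤ i₀ + 1 := by
      unfold secondIdx
      rw [hidx, hdropz]
      omega
    rw [hsecondA] at hsz
    omega
  have hk1 : k ≤ i₀ + 1 := by
    by_contra hcon
    push_neg at hcon
    have htk2 : S.take (i₀ + 2) = S.take i₀ ++ [a, z] := by
      conv_lhs => rw [hS]
      rw [show i₀ + 2 = (S.take i₀).length + 2 from by omega, List.take_append]
      simp
    have hsub : [a, z] <+ S.take k := by
      have h1 : [a, z] <+ S.take (i₀ + 2) := htk2 ▸ List.sublist_append_right (S.take i₀) [a, z]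
      exact h1.trans (List.take_prefix_take_left (l := S) (by omega)).sublist
    have : le z a := (hle a z).mpr (Or.inr hsub)
    exact hza (hamin z this)
  have htk1 : S.take (i₀ + 1) = S.take i₀ ++ [a] := htake1
  have hleSub : ∀ u v, le u v → u ≠ v → [v, u] <+ S.take i₀ ++ [a] := by
    intro u v h hne
    rcases (hle v u).mp h with he | hs
    · exact absurd he.symm hne
    · exact hs.trans (htk1 ▸ (List.take_prefix_take_left (l := S) hk1).sublist)
  have hleFacts : ∀ u v, le u v → u ≠ v → v ∈ S.take i₀ ∧ v ≠ a ∧ v ≠ z ∧ u ≠ z := by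
    intro u v h hne
    have hs := hleSub u v h hne
    have hvm : v ∈ S.take i₀ ++ [a] := hs.subset (by simp)
    have hum : u ∈ S.take i₀ ++ [a] := hs.subset (by simp)
    have hnez : ∀ w ∈ S.take i₀ ++ [a], w ≠ z := by
      intro w hw
      rcases List.mem_append.mp hw with hw | hw
      · rintro rfl; exact hzP hw
      · simp at hw; subst hw; exact fun e => hza e.symm
    have hva : v ≠ a := by
      rintro rfl
      rcases List.sublist_append_iff.mp hs with ⟨l₁, l₂, heq, h₁, h₂⟩
      rcases l₁ with _ | ⟨p, _ | ⟨q, t⟩⟩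
      · simp only [List.nil_append] at heq
        have := h₂.length_le
        rw [← heq] at this
        simp at this
      · simp only [List.cons_append, List.nil_append] at heq
        injection heq with he1 he2
        have hu2 := h₂.subset (show u ∈ l₂ by rw [← he2]; simp)
        simp at hu2
        exact hne hu2
      · simp only [List.cons_append] at heq
        injection heq with he1 heq'
        exact haPfx (h₁.subset (by rw [he1]; simp))
    refine ⟨?_, hva, hnez v hvm, hnez u hum⟩
    rcases List.mem_append.mp hvm with hv | hv
    · exact hv
    · simp at hv; exact absurd hv hva
  have hwS_of_le : ∀ u v, le u v → u ≠ v → u ∈ S := by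
    intro u v h hne
    have hs := hleSub u v h hne
    have hum : u ∈ S.take i₀ ++ [a] := hs.subset (by simp)
    rcases List.mem_append.mp hum with hu | hu
    · rw [hS]; exact List.mem_append.mpr (Or.inl hu)
    · simp at hu; subst hu; exact haS
  -- L0 : the minimum of any witness over letters of S is a or z
  have hminAZ : ∀ le' : Γ → Γ → Prop, IsLinearOrder Γ le' → (∀ u v, le u v → le' u v) →
      NoBCA S le' → (∀ s ∈ S, le' a s) ∨ (∀ s ∈ S, le' z s) := by
    intro le' hlin hext hno
    obtain ⟨m, hmS, hmin⟩ := exists_min_list le' hlin S (List.ne_nil_of_mem haS)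
    by_cases hma : m = a
    · exact Or.inl (hma ▸ hmin)
    by_cases hmz : m = z
    · exact Or.inr (hmz ▸ hmin)
    exfalso
    by_cases hmxr : m ∈ x :: R
    · have hwM : m ∈ M ++ x :: R := List.mem_append.mpr (Or.inr hmxr)
      have p1 : [a, z, m] <+ S := by
        rw [hS]
        exact ((((List.singleton_sublist.mpr hwM).cons a).cons₂ z).cons₂ a).trans
          (List.sublist_append_right (S.take i₀) _)
      have p2 : [z, a, m] <+ S := by
        rw [hS]
        exact ((((List.singleton_sublist.mpr hwM).cons₂ a).cons₂ z).cons a).trans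
          (List.sublist_append_right (S.take i₀) _)
      rcases hlin.total a z with h1 | h1
      · exact hno m a z (hmin a haS) hma h1 (fun e => hza e.symm) p1
      · exact hno m z a (hmin z hzS) hmz h1 hza p2
    · have hmblock : m ∉ a :: z :: a :: M := by
        intro hcon
        rcases hblock m hcon with h | h
        · exact hma h
        · exact hmz h
      have hmP : m ∈ S.take i₀ := by
        rw [hS] at hmS
        rcases List.mem_append.mp hmS with h | h
        · exact h
        · exfalso
          rcases List.mem_cons.mp h with rfl | h
          · exact hma rfl
          rcases List.mem_cons.mp h with rfl | h
          · exact hmz rfl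
          rcases List.mem_cons.mp h with rfl | h
          · exact hma rfl
          rcases List.mem_append.mp h with h | h
          · rcases hzM m h with h' | h'
            · exact hma h'
            · exact hmz h'
          · exact hmxr h
      obtain ⟨A₁, A₂, hA, h1⟩ := mem_split_first hmP
      have hS2 : S = A₁ ++ m :: (A₂ ++ a :: z :: a :: (M ++ x :: R)) := by
        conv_lhs => rw [hS, hA]
        simp
      have hidx : S.idxOf m = A₁.length :=
        (congrArg (fun L => List.idxOf m L) hS2).trans (indexOf_append_first _ h1)
      have hlenA : A₁.length + 1 + A₂.length = i₀ := by
        have hL := congrArg List.length hA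
        rw [hlenP] at hL
        simp at hL
        omega
      by_cases h2 : 2 ≤ (S.take i₀).count m
      · -- m occurs twice in the prefix : contradiction with haE
        have hcA2 : m ∈ A₂ := by
          have h3 : (S.take i₀).count m = A₁.count m + (A₂.count m + 1) := by
            rw [hA, List.count_append, List.count_cons_self]
          have hA1 : A₁.count m = 0 := List.count_eq_zero.mpr h1
          exact List.count_pos_iff.mp (by omega)
        obtain ⟨B₁, B₂, hB⟩ := List.append_of_mem hcA2
        have hdropm : S.drop (A₁.length + 1) = A₂ ++ a :: z :: a :: (M ++ x :: R) := by
          conv_lhs => rw [hS2]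
          exact drop_len_append _ _ _
        have hb2 : (A₂ ++ a :: z :: a :: (M ++ x :: R)).idxOf m ≤ B₁.length := by
          have h4 : A₂ ++ a :: z :: a :: (M ++ x :: R)
              = B₁ ++ m :: (B₂ ++ a :: z :: a :: (M ++ x :: R)) := by
            rw [hB]; simp
          rw [h4]
          have h5 := indexOf_append_le m B₁ (m :: (B₂ ++ a :: z :: a :: (M ++ x :: R)))
          rw [List.idxOf_cons_self] at h5
          simpa using h5
        have hcount2 : 2 ≤ S.count m := by
          have h6 : S.count m
              = (S.take i₀).count m + (a :: z :: a :: (M ++ x :: R)).count m := by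
            conv_lhs => rw [hS]
            rw [List.count_append]
          omega
        have hsece := haE m hcount2
        have hszle : secondIdx S m ≤ A₁.length + 1 + B₁.length := by
          unfold secondIdx
          rw [hidx, hdropm]
          omega
        have hlenB : B₁.length ≤ A₂.length := by
          have hL := congrArg List.length hB
          simp at hL
          omega
        omega
      · -- m is lonely, hence non-minimal, contradicting minimality in le'
        have hc1 : S.count m = 1 := by
          have hge : 0 < (S.take i₀).count m := List.count_pos_iff.mpr hmP
          have hrest0 : (a :: z :: a :: (M ++ x :: R)).count m = 0 :=
            List.count_eq_zero.mpr (by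
              intro hcon
              rcases List.mem_cons.mp hcon with rfl | hcon
              · exact hma rfl
              rcases List.mem_cons.mp hcon with rfl | hcon
              · exact hmz rfl
              rcases List.mem_cons.mp hcon with rfl | hcon
              · exact hma rfl
              rcases List.mem_append.mp hcon with hcon | hcon
              · rcases hzM m hcon with h | h
                · exact hma h
                · exact hmz h
              · exact hmxr hcon)
          have h6 : S.count m
              = (S.take i₀).count m + (a :: z :: a :: (M ++ x :: R)).count m := by
            conv_lhs => rw [hS]
            rw [List.count_append]
          omega
        have hidxlt : S.idxOf m < secondIdx S a := by
          rw [hsecondA, hidx]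
          omega
        have hnm : ¬ (∀ w, le w m → w = m) := fun hmin' => hnl m hc1 hmin' hidxlt
        push_neg at hnm
        obtain ⟨w, hw, hwm⟩ := hnm
        have hwm' : w ≠ m := hwm
        have hwS : w ∈ S := hwS_of_le w m hw hwm'
        exact hwm' (hlin.antisymm w m (hext w m hw) (hmin w hwS))
  -- structural impossibility lemmas
  have hnotZCA : a ∉ x :: R → ∀ c, c ≠ a → c ≠ z → ¬ ([z, c, a] <+ S) := by
    intro haxr c hca hcz hsub
    rw [hSassoc] at hsub
    have h1 : [z, c] ++ [a] <+ S.take i₀ ++ a :: z :: a :: M := peelR hsub haxr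
    have h2 : [z, c, a] <+ a :: z :: a :: M :=
      peelL (show z :: [c, a] <+ S.take i₀ ++ (a :: z :: a :: M) from h1) hzP
    have hc : c ∈ a :: z :: a :: M := h2.subset (by simp)
    rcases hblock c hc with h | h
    · exact hca h
    · exact hcz h
  have hnotACZ : z ∉ x :: R → ∀ c, c ≠ a → c ≠ z → ¬ ([a, c, z] <+ S) := by
    intro hzxr c hca hcz hsub
    rw [hSassoc] at hsub
    have h1 : [a, c] ++ [z] <+ S.take i₀ ++ a :: z :: a :: M := peelR hsub hzxr
    have h2 : [a, c, z] <+ a :: z :: a :: M :=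
      peelL (show a :: [c, z] <+ S.take i₀ ++ (a :: z :: a :: M) from h1) haPfx
    have hc : c ∈ a :: z :: a :: M := h2.subset (by simp)
    rcases hblock c hc with h | h
    · exact hca h
    · exact hcz h
  have hPfxPair : ∀ w : Γ, w ∉ x :: R → ∀ b c, b ≠ a → b ≠ z → c ≠ a → c ≠ z →
      ([b, c, w] <+ S) → [b, c] <+ S.take i₀ := by
    intro w hwxr b c hba hbz hca hcz hsub
    rw [hSassoc] at hsub
    have h1 : [b, c] ++ [w] <+ S.take i₀ ++ a :: z :: a :: M := peelR hsub hwxr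
    rcases List.sublist_append_iff.mp h1 with ⟨l₁, l₂, heq, hl₁, hl₂⟩
    have hmem₂ : ∀ u ∈ l₂, u = a ∨ u = z := fun u hu => hblock u (hl₂.subset hu)
    rcases l₁ with _ | ⟨p, _ | ⟨q, t⟩⟩
    · exfalso
      simp only [List.nil_append] at heq
      rcases hmem₂ b (by rw [← heq]; simp) with h | h
      · exact hba h
      · exact hbz h
    · exfalso
      simp only [List.cons_append, List.nil_append] at heq
      injection heq with he1 he2
      rcases hmem₂ c (by rw [← he2]; simp) with h | h
      · exact hca h
      · exact hcz h
    · simp only [List.cons_append] at heq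
      injection heq with he1 heq'
      injection heq' with he2 heq''
      have hbc : [b, c] <+ p :: q :: t := by
        rw [← he1, ← he2]
        exact ((List.nil_sublist t).cons₂ c).cons₂ b
      exact hbc.trans hl₁
  have hPA : ∀ b c : Γ, [b, c] <+ S.take i₀ → [b, c, a] <+ S := by
    intro b c h
    rw [hS]
    exact h.append (List.singleton_sublist.mpr (by simp : a ∈ a :: z :: a :: (M ++ x :: R)))
  have hPZ : ∀ b c : Γ, [b, c] <+ S.take i₀ → [b, c, z] <+ S := by
    intro b c h
    rw [hS]
    exact h.append (List.singleton_sublist.mpr (by simp : z ∈ a :: z :: a :: (M ++ x :: R)))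
  -- deciders
  have decideA : ∀ le' : Γ → Γ → Prop, IsLinearOrder Γ le' → (∀ u v, le u v → le' u v) →
      NoBCA S le' → (∀ s ∈ S, le' a s) → DecidedBy S le {a} := by
    intro le' hlin hext hno hmin
    right
    refine ⟨below1 a le', below1_linear a hlin, ?_, ⟨a, rfl, below1_bot a le'⟩,
      below1_noBCA hno hmin⟩
    intro u v huv
    by_cases hue : u = v
    · subst hue
      by_cases h : u = a
      · exact Or.inl h
      · exact Or.inr ⟨h, hlin.refl u⟩
    · by_cases h : u = a
      · exact Or.inl h
      · exact Or.inr ⟨(hleFacts u v huv hue).2.1, hext u v huv⟩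
  have decideZ : ∀ le' : Γ → Γ → Prop, IsLinearOrder Γ le' → (∀ u v, le u v → le' u v) →
      NoBCA S le' → (∀ s ∈ S, le' z s) → DecidedBy S le {z} := by
    intro le' hlin hext hno hmin
    right
    refine ⟨below1 z le', below1_linear z hlin, ?_, ⟨z, rfl, below1_bot z le'⟩,
      below1_noBCA hno hmin⟩
    intro u v huv
    by_cases hue : u = v
    · subst hue
      by_cases h : u = z
      · exact Or.inl h
      · exact Or.inr ⟨h, hlin.refl u⟩
    · by_cases h : u = z
      · exact Or.inl h
      · exact Or.inr ⟨(hleFacts u v huv hue).2.2.1, hext u v huv⟩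
  have decideA2 : a ∉ x :: R → ∀ le' : Γ → Γ → Prop, IsLinearOrder Γ le' →
      (∀ u v, le u v → le' u v) → NoBCA S le' → (∀ s ∈ S, le' z s) → DecidedBy S le {a} := by
    intro haxr le' hlin hext hno hmin
    right
    refine ⟨below1 a (below1 z le'), below1_linear a (below1_linear z hlin), ?_,
      ⟨a, rfl, below1_bot a _⟩, ?_⟩
    · intro u v huv
      by_cases hue : u = v
      · subst hue
        by_cases h : u = a
        · exact Or.inl h
        · by_cases h2 : u = z
          · exact Or.inr ⟨h, Or.inl h2⟩
          · exact Or.inr ⟨h, Or.inr ⟨h2, hlin.refl u⟩⟩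
      · by_cases h : u = a
        · exact Or.inl h
        · obtain ⟨-, hva, hvz, -⟩ := hleFacts u v huv hue
          exact Or.inr ⟨hva, Or.inr ⟨hvz, hext u v huv⟩⟩
    · refine below2_noBCA hno hmin (hnotZCA haxr) ?_
      intro b c hba hbz hca hcz hbc hbcne hsub
      have hp := hPfxPair a haxr b c hba hbz hca hcz hsub
      exact hno z b c (hmin b (hsub.subset (by simp))) (fun e => hbz e.symm) hbc hbcne
        (hPZ b c hp)
  have decideZ2 : z ∉ x :: R → ∀ le' : Γ → Γ → Prop, IsLinearOrder Γ le' →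
      (∀ u v, le u v → le' u v) → NoBCA S le' → (∀ s ∈ S, le' a s) → DecidedBy S le {z} := by
    intro hzxr le' hlin hext hno hmin
    right
    refine ⟨below1 z (below1 a le'), below1_linear z (below1_linear a hlin), ?_,
      ⟨z, rfl, below1_bot z _⟩, ?_⟩
    · intro u v huv
      by_cases hue : u = v
      · subst hue
        by_cases h : u = z
        · exact Or.inl h
        · by_cases h2 : u = a
          · exact Or.inr ⟨h, Or.inl h2⟩
          · exact Or.inr ⟨h, Or.inr ⟨h2, hlin.refl u⟩⟩
      · by_cases h : u = z
        · exact Or.inl h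
        · obtain ⟨-, hva, hvz, -⟩ := hleFacts u v huv hue
          by_cases h2 : u = a
          · exact Or.inr ⟨hvz, Or.inl h2⟩
          · exact Or.inr ⟨hvz, Or.inr ⟨hva, hext u v huv⟩⟩
    · refine below2_noBCA hno hmin (fun c h1 h2 => hnotACZ hzxr c h2 h1) ?_
      intro b c hbz hba hcz2 hca2 hbc hbcne hsub
      have hp := hPfxPair z hzxr b c hba hbz hca2 hcz2 hsub
      exact hno a b c (hmin b (hsub.subset (by simp))) (fun e => hba e.symm) hbc hbcne
        (hPA b c hp)
  refine ⟨?_, ?_, ?_⟩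
  · rintro ⟨haR, hzR⟩
    constructor
    · intro hidxlt
      by_cases hfs : PairFootSortable S le
      · obtain ⟨le', hlin, hext, hno⟩ := hfs
        rcases hminAZ le' hlin hext hno with hA | hZ
        · exact decideA le' hlin hext hno hA
        · exfalso
          have haz : [a, z] <+ R := indexOf_lt_sublist haR hzR hidxlt
          have p1 : [a, x, z] <+ S := by
            rw [hS]
            have h1 : [x, z] <+ x :: R := (List.singleton_sublist.mpr hzR).cons₂ x
            have h2 : [x, z] <+ M ++ x :: R := h1.trans (List.sublist_append_right M (x :: R))
            exact (((h2.cons a).cons z).cons₂ a).trans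
              (List.sublist_append_right (S.take i₀) _)
          have p2 : [x, a, z] <+ S := by
            rw [hS]
            have h1 : [x, a, z] <+ x :: R := haz.cons₂ x
            have h2 : [x, a, z] <+ M ++ x :: R := h1.trans (List.sublist_append_right M (x :: R))
            exact (((h2.cons a).cons z).cons a).trans
              (List.sublist_append_right (S.take i₀) _)
          rcases hlin.total a x with h1 | h1
          · exact hno z a x (hZ a haS) hza h1 (fun e => hxa e.symm) p1
          · exact hno z x a (hZ x hxS) (fun e => hxz e.symm) h1 hxa p2
      · exact Or.inl hfs
    · intro hidxlt
      by_cases hfs : PairFootSortable S le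
      · obtain ⟨le', hlin, hext, hno⟩ := hfs
        rcases hminAZ le' hlin hext hno with hA | hZ
        · exfalso
          have hza' : [z, a] <+ R := indexOf_lt_sublist hzR haR hidxlt
          have p1 : [z, x, a] <+ S := by
            rw [hS]
            have h1 : [x, a] <+ x :: R := (List.singleton_sublist.mpr haR).cons₂ x
            have h2 : [x, a] <+ M ++ x :: R := h1.trans (List.sublist_append_right M (x :: R))
            exact ((((h2.cons a).cons₂ z)).cons a).trans
              (List.sublist_append_right (S.take i₀) _)
          have p2 : [x, z, a] <+ S := by
            rw [hS]
            have h1 : [x, z, a] <+ x :: R := hza'.cons₂ x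
            have h2 : [x, z, a] <+ M ++ x :: R := h1.trans (List.sublist_append_right M (x :: R))
            exact (((h2.cons a).cons z).cons a).trans
              (List.sublist_append_right (S.take i₀) _)
          rcases hlin.total z x with h1 | h1
          · exact hno a z x (hA z hzS) (fun e => hza e.symm) h1 (fun e => hxz e.symm) p1
          · exact hno a x z (hA x hxS) (fun e => hxa e.symm) h1 hxz p2
        · exact decideZ le' hlin hext hno hZ
      · exact Or.inl hfs
  · intro haR
    by_cases hfs : PairFootSortable S le
    · obtain ⟨le', hlin, hext, hno⟩ := hfs
      have haxr : a ∉ x :: R := by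
        intro hcon
        rcases List.mem_cons.mp hcon with h | h
        · exact hxa h.symm
        · exact haR h
      rcases hminAZ le' hlin hext hno with hA | hZ
      · exact decideA le' hlin hext hno hA
      · exact decideA2 haxr le' hlin hext hno hZ
    · exact Or.inl hfs
  · intro hzR
    by_cases hfs : PairFootSortable S le
    · obtain ⟨le', hlin, hext, hno⟩ := hfs
      have hzxr : z ∉ x :: R := by
        intro hcon
        rcases List.mem_cons.mp hcon with h | h
        · exact hxz h.symm
        · exact hzR h
      rcases hminAZ le' hlin hext hno with hA | hZ
      · exact decideZ2 hzxr le' hlin hext hno hA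
      · exact decideZ le' hlin hext hno hZ
    · exact Or.inl hfs
end

section
/- Let S be a reduced string representing a sock ordering and let ≤ be a simple partial order on its alphabet. Let a be the unlonely letter whose second occurrence in S is earliest, and suppose the earliest minimal lonely letter b exists and occurs strictly between the first two occurrences of a. Then (S, ≤) is {a, b}-decided. -/
open List

universe u

variable {Γ : Type u}

section Aux

lemma exists_rel_min (r : Γ → Γ → Prop) (htot : ∀ x y, r x y ∨ r y x)
    (htr : ∀ {x y z}, r x y → r y z → r x z) :
    ∀ l : List Γ, l ≠ [] → ∃ m ∈ l, ∀ x ∈ l, r m x := by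
  intro l
  induction l with
  | nil => simp
  | cons h t ih =>
    intro _
    rcases eq_or_ne t [] with rfl | ht
    · refine ⟨h, by simp, ?_⟩
      intro x hx
      simp only [mem_singleton, mem_cons, not_mem_nil, or_false] at hx
      subst hx
      rcases htot x x with h' | h' <;> exact h'
    · obtain ⟨m, hm, hmin⟩ := ih ht
      rcases htot h m with hr | hr
      · refine ⟨h, by simp, ?_⟩
        intro x hx
        rcases mem_cons.1 hx with rfl | hx
        · rcases htot x x with h' | h' <;> exact h'
        · exact htr hr (hmin x hx)
      · exact ⟨m, mem_cons_of_mem _ hm, fun x hx => by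
          rcases mem_cons.1 hx with rfl | hx
          · exact hr
          · exact hmin x hx⟩

lemma indexOf_le_of_getElem' [DecidableEq Γ] :
    ∀ (S : List Γ) (i : ℕ) (h : i < S.length), S.idxOf S[i] ≤ i := by
  intro S
  induction S with
  | nil => simp
  | cons x T ih =>
    intro i h
    cases i with
    | zero => simp
    | succ n =>
      have hn : n < T.length := by simpa using Nat.lt_of_succ_lt_succ h
      have hih := ih n hn
      simp only [List.getElem_cons_succ, List.idxOf_cons]
      cases hb : (x == T[n]'hn) <;> simp [hb] <;> omega

lemma sublist_of_three (S : List Γ) {i j p : ℕ} (hij : i < j) (hjp : j < p)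
    (hp : p < S.length) :
    [S[i]'(by omega), S[j]'(by omega), S[p]] <+ S := by
  have hi : i < S.length := by omega
  have hj : j < S.length := by omega
  have := List.map_getElem_sublist (l := S)
    (is := [⟨i, hi⟩, ⟨j, hj⟩, ⟨p, hp⟩]) (by simp [hij, hjp]; omega)
  simpa using this

lemma three_indices_of_sublist (S : List Γ) {x y z : Γ} (h : [x, y, z] <+ S) :
    ∃ i j p, i < j ∧ j < p ∧ ∃ hp : p < S.length,
      ∃ hi : i < S.length, ∃ hj : j < S.length, S[i] = x ∧ S[j] = y ∧ S[p] = z := by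
  obtain ⟨is, h1, h2⟩ := List.sublist_eq_map_getElem h
  have hlen : is.length = 3 := by
    have := congrArg List.length h1
    simpa using this.symm
  obtain ⟨a, b, c, rfl⟩ := List.length_eq_three.1 hlen
  simp only [List.map_cons, List.map_nil, List.cons.injEq, and_true] at h1
  obtain ⟨hx, hy, hz⟩ := h1
  simp only [List.pairwise_cons, List.mem_cons, List.mem_singleton, List.not_mem_nil] at h2
  refine ⟨a, b, c, ?_, ?_, c.isLt, a.isLt, b.isLt, hx.symm, hy.symm, hz.symm⟩
  · exact h2.1 b (Or.inl rfl)
  · exact h2.2.1 c (Or.inl rfl)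

lemma not_mem_take_indexOf' [DecidableEq Γ] (S : List Γ) (c : Γ) :
    c ∉ S.take (S.idxOf c) := by
  intro hmem
  obtain ⟨i, hi, hget⟩ := List.getElem_of_mem hmem
  have hi' : i < S.length := lt_of_lt_of_le hi (by simpa using List.length_take_le _ _)
  have : S[i] = c := by rw [← hget]; simp
  have h2 := indexOf_le_of_getElem' S i hi'
  rw [this] at h2
  have : i < S.idxOf c := lt_of_lt_of_le hi (by simp)
  omega

lemma count_take_succ_indexOf [DecidableEq Γ] (S : List Γ) (c : Γ) (h : c ∈ S) :
    (S.take (S.idxOf c + 1)).count c = 1 := by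
  have hlt : S.idxOf c < S.length := List.idxOf_lt_length_iff.2 h
  rw [List.take_succ, List.count_append]
  have h0 : (S.take (S.idxOf c)).count c = 0 :=
    List.count_eq_zero.2 (not_mem_take_indexOf' S c)
  have : S[S.idxOf c]? = some c := by
    rw [List.getElem?_eq_getElem hlt, List.getElem_idxOf hlt]
  rw [h0, this]
  simp

lemma secondIdx_spec [DecidableEq Γ] {S : List Γ} {c : Γ} (h : 2 ≤ S.count c) :
    ∃ hlt : secondIdx S c < S.length,
      S.idxOf c < secondIdx S c ∧ S[secondIdx S c] = c := by
  have hc : c ∈ S := List.count_pos_iff.1 (by omega)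
  have hi0 : S.idxOf c < S.length := List.idxOf_lt_length_iff.2 hc
  have hsplit : S.count c
      = (S.take (S.idxOf c + 1)).count c + (S.drop (S.idxOf c + 1)).count c := by
    rw [← List.count_append, List.take_append_drop]
  have h1 : (S.take (S.idxOf c + 1)).count c = 1 := count_take_succ_indexOf S c hc
  have hmem : c ∈ S.drop (S.idxOf c + 1) := List.count_pos_iff.1 (by omega)
  have hj : (S.drop (S.idxOf c + 1)).idxOf c < (S.drop (S.idxOf c + 1)).length :=
    List.idxOf_lt_length_iff.2 hmem
  have hlen : (S.drop (S.idxOf c + 1)).length = S.length - (S.idxOf c + 1) :=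
    List.length_drop
  have hlt : secondIdx S c < S.length := by unfold secondIdx; omega
  refine ⟨hlt, by unfold secondIdx; omega, ?_⟩
  show S[S.idxOf c + 1 + (S.drop (S.idxOf c + 1)).idxOf c] = c
  have hd := List.getElem_idxOf hj
  rw [List.getElem_drop] at hd
  exact hd

lemma eq_indexOf_of_count_one [DecidableEq Γ] {S : List Γ} {c : Γ} (h : S.count c = 1)
    {p : ℕ} (hp : p < S.length) (hc : S[p] = c) : p = S.idxOf c := by
  have h1 := indexOf_le_of_getElem' S p hp
  rw [hc] at h1
  rcases eq_or_lt_of_le h1 with heq | hlt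
  · omega
  · exfalso
    have hcS : c ∈ S := by rw [← hc]; exact List.getElem_mem hp
    have hi0 : S.idxOf c < S.length := List.idxOf_lt_length_iff.2 hcS
    have hsplit : S.count c
        = (S.take (S.idxOf c + 1)).count c + (S.drop (S.idxOf c + 1)).count c := by
      rw [← List.count_append, List.take_append_drop]
    have ht : (S.take (S.idxOf c + 1)).count c = 1 := count_take_succ_indexOf S c hcS
    have hd : c ∈ S.drop (S.idxOf c + 1) := by
      obtain ⟨q, rfl⟩ : ∃ q, p = S.idxOf c + 1 + q := ⟨p - (S.idxOf c + 1), by omega⟩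
      have hq : q < (S.drop (S.idxOf c + 1)).length := by
        rw [List.length_drop]; omega
      have hcq : (S.drop (S.idxOf c + 1))[q] = c := by
        rw [List.getElem_drop]; exact hc
      have hm := List.getElem_mem hq
      rw [hcq] at hm
      exact hm
    have : 1 ≤ (S.drop (S.idxOf c + 1)).count c := List.count_pos_iff.2 hd
    omega

end Aux

/-- Case 3: if the earliest minimal lonely letter `b` lies strictly between the first
two occurrences of `a`, then `(S, le)` is `{a, b}`-decided. -/
theorem statement8 {Γ : Type u} [DecidableEq Γ] (S : List Γ) (le : Γ → Γ → Prop)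
    (hpo : IsPartialOrder Γ le) (hred : List.Chain' (· ≠ ·) S)
    (hsimp : SimpleOrder S le)
    (a : Γ) (ha : 2 ≤ S.count a)
    (haE : ∀ c : Γ, 2 ≤ S.count c → secondIdx S a ≤ secondIdx S c)
    (b : Γ) (hb : S.count b = 1) (hbmin : ∀ x, le x b → x = b)
    (hbE : ∀ c : Γ, S.count c = 1 → (∀ x, le x c → x = c) → S.idxOf b ≤ S.idxOf c)
    (hb1 : S.idxOf a < S.idxOf b) (hb2 : S.idxOf b < secondIdx S a) :
    DecidedBy S le {a, b} := by
  by_cases hfs : PairFootSortable S le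
  case neg => exact Or.inl hfs
  obtain ⟨le', hlin, hext, hnb⟩ := hfs
  have htot := hlin.total
  have htrans : ∀ {x y z : Γ}, le' x y → le' y z → le' x z :=
    fun h1 h2 => hlin.trans _ _ _ h1 h2
  have hanti : ∀ {x y : Γ}, le' x y → le' y x → x = y :=
    fun h1 h2 => hlin.antisymm _ _ h1 h2
  have haS : a ∈ S := List.count_pos_iff.1 (by omega)
  have hbS : b ∈ S := List.count_pos_iff.1 (by omega)
  have hSne : S ≠ [] := fun h => by simp [h] at haS
  obtain ⟨m, hmS, hmin⟩ := exists_rel_min le' htot (fun h1 h2 => htrans h1 h2) S hSne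
  obtain ⟨k, hk, hkspec⟩ := hsimp
  have hmlemin : ∀ x, le x m → x = m := by
    intro x hx
    rcases (hkspec m x).1 hx with h | hsub
    · exact h.symm
    · have hxS : x ∈ S := (hsub.trans (List.take_sublist k S)).mem (by simp)
      exact hanti (hext x m hx) (hmin x hxS)
  have hab : a ≠ b := fun h => by rw [h] at ha; omega
  have key : ∀ w : Γ, w ∈ ({a, b} : Set Γ) → (∀ x, le x w → x = w) →
      (∀ y z : Γ, y ≠ w → z ≠ w → y ≠ z → le' y z → ¬ ([y, z, w] <+ S)) →
      DecidedBy S le {a, b} := by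
    intro w hwab hwmin hsafe
    right
    refine ⟨fun x y => x = w ∨ (y ≠ w ∧ le' x y), ?_, ?_, ⟨w, hwab, fun x => Or.inl rfl⟩, ?_⟩
    · refine { toIsPartialOrder := ?_, toTotal := ?_ }
      · refine { toIsPreorder := ?_, toAntisymm := ?_ }
        · refine { toRefl := ⟨fun x => ?_⟩, toIsTrans := ⟨fun x y z hxy hyz => ?_⟩ }
          · by_cases hx : x = w
            · exact Or.inl hx
            · exact Or.inr ⟨hx, hlin.refl x⟩
          · rcases hxy with rfl | ⟨hy, hxy⟩
            · exact Or.inl rfl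
            · rcases hyz with rfl | ⟨hz, hyz⟩
              · exact absurd rfl hy
              · exact Or.inr ⟨hz, htrans hxy hyz⟩
        · refine ⟨fun x y hxy hyx => ?_⟩
          rcases hxy with rfl | ⟨hy, hxy⟩
          · rcases hyx with rfl | ⟨hx, _⟩
            · rfl
            · exact absurd rfl hx
          · rcases hyx with rfl | ⟨hx, hyx⟩
            · exact absurd rfl hy
            · exact hanti hxy hyx
      · refine ⟨fun x y => ?_⟩
        by_cases hx : x = w
        · exact Or.inl (Or.inl hx)
        · by_cases hy : y = w
          · exact Or.inr (Or.inl hy)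
          · rcases htot x y with h | h
            · exact Or.inl (Or.inr ⟨hy, h⟩)
            · exact Or.inr (Or.inr ⟨hx, h⟩)
    · intro x y hxy
      by_cases hx : x = w
      · exact Or.inl hx
      · refine Or.inr ⟨?_, hext x y hxy⟩
        intro hy; subst hy; exact hx (hwmin x hxy)
    · intro p q r h1 hne1 h2 hne2 hsub
      by_cases hp : p = w
      · subst hp
        rcases h2 with rfl | ⟨hr, h2⟩
        · exact hne1 rfl
        · exact hsafe q r (Ne.symm hne1) hr hne2 h2 hsub
      · rcases h1 with rfl | ⟨hq, h1⟩
        · exact hp rfl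
        · rcases h2 with rfl | ⟨hr, h2⟩
          · exact absurd rfl hq
          · exact hnb p q r h1 hne1 h2 hne2 hsub
  by_cases hma : m = a
  · subst hma
    refine key m (by simp) hmlemin ?_
    intro y z hyw hzw hyz hle hsub
    have hyS : y ∈ S := hsub.mem (by simp)
    exact hnb m y z (hmin y hyS) (Ne.symm hyw) hle hyz hsub
  by_cases hmb : m = b
  · subst hmb
    refine key m (by simp) hbmin ?_
    intro y z hyw hzw hyz hle hsub
    have hyS : y ∈ S := hsub.mem (by simp)
    exact hnb m y z (hmin y hyS) (Ne.symm hyw) hle hyz hsub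
  by_cases hm1 : S.count m = 1
  · refine key b (by simp) hbmin ?_
    intro y z hyb hzb hyz hle hsub
    obtain ⟨i, j, p, hij, hjp, hp, hi, hj, hyi, hzj, hbp⟩ := three_indices_of_sublist S hsub
    have hpb : p = S.idxOf b := eq_indexOf_of_count_one hb hp hbp
    have hbm : S.idxOf b ≤ S.idxOf m := hbE m hm1 hmlemin
    have hmlt : S.idxOf m < S.length := List.idxOf_lt_length_iff.2 hmS
    have hjm : j < S.idxOf m := by omega
    have hsub2 : [y, z, m] <+ S := by
      have := sublist_of_three S hij hjm hmlt
      rwa [hyi, hzj, List.getElem_idxOf hmlt] at this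
    have hym : y ≠ m := by
      intro h
      have hle' := indexOf_le_of_getElem' S i hi
      rw [hyi, h] at hle'
      omega
    have hyS : y ∈ S := hsub.mem (by simp)
    exact hnb m y z (hmin y hyS) (Ne.symm hym) hle hyz hsub2
  · exfalso
    have hm2 : 2 ≤ S.count m := by
      have : 0 < S.count m := List.count_pos_iff.2 hmS
      omega
    obtain ⟨hL, hL1, hLget⟩ := secondIdx_spec hm2
    obtain ⟨hA, hA1, hAget⟩ := secondIdx_spec ha
    have hAL : secondIdx S a ≤ secondIdx S m := haE m hm2
    have hALne : secondIdx S a ≠ secondIdx S m := by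
      intro hEq
      have heq : S[secondIdx S a]'hA = m := by
        rw [← hLget]; congr 1
      exact hma (by rw [← heq, hAget])
    have halt : S.idxOf a < S.length := List.idxOf_lt_length_iff.2 haS
    have hblt : S.idxOf b < S.length := List.idxOf_lt_length_iff.2 hbS
    have h1 : [a, b, m] <+ S := by
      have := sublist_of_three S hb1 (show S.idxOf b < secondIdx S m by omega) hL
      rwa [List.getElem_idxOf halt, List.getElem_idxOf hblt, hLget] at this
    have h2 : [b, a, m] <+ S := by
      have := sublist_of_three S hb2 (show secondIdx S a < secondIdx S m by omega) hL
      rwa [List.getElem_idxOf hblt, hAget, hLget] at this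
    rcases htot a b with h | h
    · exact hnb m a b (hmin a haS) hma h hab h1
    · exact hnb m b a (hmin b hbS) hmb h (Ne.symm hab) h2
end

section
/- Let S be a reduced string with a simple partial order ≤ on its alphabet, let a be the unlonely letter whose second occurrence is earliest, and suppose the earliest minimal lonely letter b exists and occurs strictly between the first two occurrences of a. If a is not a minimal element of ≤ (equivalently, the distinguished minimal letter comes after the first occurrence of a), then (S, ≤) is b-decided. -/
open List

universe u

variable {Γ : Type u}

section SockAuxHelpers

variable {Γ : Type u}

theorem sock_getElem_congr {l : List Γ} {i j : ℕ} (h : i = j) (hj : j < l.length) :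
    l[i]'(h ▸ hj) = l[j]'hj := by subst h; rfl

theorem sock_pair_sublist {l : List Γ} {i j : ℕ} {u v : Γ} (hij : i < j) (hj : j < l.length)
    (hu : l[i]'(hij.trans hj) = u) (hv : l[j]'hj = v) : [u, v] <+ l := by
  have hi : i < l.length := hij.trans hj
  have hd : j - (i+1) < (l.drop (i+1)).length := by rw [List.length_drop]; omega
  have h1 : [v] <+ l.drop (i+1) := by
    rw [List.singleton_sublist, List.mem_iff_getElem]
    exact ⟨j - (i+1), hd,
      (List.getElem_drop (xs := l)).trans ((sock_getElem_congr (by omega) hj).trans hv)⟩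
  have h2 : [u, v] <+ l.drop i := by
    rw [List.drop_eq_getElem_cons hi, ← hu]
    exact h1.cons₂ _
  exact h2.trans (List.drop_sublist i l)

theorem sock_triple_sublist {l : List Γ} {i j t : ℕ} {u v w : Γ} (hij : i < j) (hjt : j < t)
    (ht : t < l.length) (hu : l[i]'(hij.trans (hjt.trans ht)) = u)
    (hv : l[j]'(hjt.trans ht) = v) (hw : l[t]'ht = w) : [u, v, w] <+ l := by
  have hi : i < l.length := hij.trans (hjt.trans ht)
  have hd2 : t - (i+1) < (l.drop (i+1)).length := by rw [List.length_drop]; omega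
  have h1 : [v, w] <+ l.drop (i+1) :=
    sock_pair_sublist (i := j - (i+1)) (j := t - (i+1)) (by omega) hd2
      ((List.getElem_drop (xs := l)).trans ((sock_getElem_congr (by omega) (hjt.trans ht)).trans hv))
      ((List.getElem_drop (xs := l)).trans ((sock_getElem_congr (by omega) ht).trans hw))
  have h2 : [u, v, w] <+ l.drop i := by
    rw [List.drop_eq_getElem_cons hi, ← hu]
    exact h1.cons₂ _
  exact h2.trans (List.drop_sublist i l)

theorem sock_sublist_pair_exists {l : List Γ} {u v : Γ} (h : [u, v] <+ l) :
    ∃ (i j : ℕ) (hij : i < j) (hj : j < l.length),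
      l[i]'(hij.trans hj) = u ∧ l[j]'hj = v := by
  induction l with
  | nil => exact absurd h (by simp)
  | cons x tl ih =>
    cases h with
    | cons a h' =>
      obtain ⟨i, j, hij, hj, hu, hv⟩ := ih h'
      exact ⟨i+1, j+1, by omega, by simp only [List.length_cons]; omega,
        by simpa using hu, by simpa using hv⟩
    | cons_cons a h' =>
      rw [List.singleton_sublist, List.mem_iff_getElem] at h'
      obtain ⟨n, hn, hv⟩ := h'
      exact ⟨0, n+1, by omega, by simp only [List.length_cons]; omega,
        by simp, by simpa using hv⟩

theorem sock_sublist_triple_exists {l : List Γ} {u v w : Γ} (h : [u, v, w] <+ l) :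
    ∃ (i j t : ℕ) (hij : i < j) (hjt : j < t) (ht : t < l.length),
      l[i]'(hij.trans (hjt.trans ht)) = u ∧ l[j]'(hjt.trans ht) = v ∧ l[t]'ht = w := by
  induction l with
  | nil => exact absurd h (by simp)
  | cons x tl ih =>
    cases h with
    | cons a h' =>
      obtain ⟨i, j, t, hij, hjt, ht, hu, hv, hw⟩ := ih h'
      exact ⟨i+1, j+1, t+1, by omega, by omega, by simp only [List.length_cons]; omega,
        by simpa using hu, by simpa using hv, by simpa using hw⟩
    | cons_cons a h' =>
      obtain ⟨i, j, hij, hj, hv, hw⟩ := sock_sublist_pair_exists h'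
      exact ⟨0, i+1, j+1, by omega, by omega, by simp only [List.length_cons]; omega,
        by simp, by simpa using hv, by simpa using hw⟩

theorem sock_two_le_count [DecidableEq Γ] {l : List Γ} {i j : ℕ} {c : Γ} (hij : i < j)
    (hj : j < l.length) (hi : l[i]'(hij.trans hj) = c) (hjv : l[j]'hj = c) :
    2 ≤ l.count c :=
  List.duplicate_iff_two_le_count.mp
    (List.duplicate_iff_sublist.mpr (sock_pair_sublist hij hj hi hjv))

theorem sock_indexOf_le [DecidableEq Γ] {l : List Γ} {t : ℕ} {c : Γ} (ht : t < l.length)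
    (h : l[t]'ht = c) : l.idxOf c ≤ t := by
  by_contra hlt
  push_neg at hlt
  have hlt' : t < List.findIdx (· == c) l := hlt
  have h2 := List.not_of_lt_findIdx hlt'
  simp [h] at h2

theorem sock_secondIdx_le [DecidableEq Γ] {l : List Γ} {c : Γ} {p q : ℕ} (hpq : p < q)
    (hq : q < l.length) (hp : l[p]'(hpq.trans hq) = c) (hqv : l[q]'hq = c) :
    secondIdx l c ≤ q := by
  have h1 : l.idxOf c ≤ p := sock_indexOf_le _ hp
  have hd : q - (l.idxOf c + 1) < (l.drop (l.idxOf c + 1)).length := by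
    rw [List.length_drop]; omega
  have hv2 : (l.drop (l.idxOf c + 1))[q - (l.idxOf c + 1)]'hd = c :=
    (List.getElem_drop (xs := l)).trans ((sock_getElem_congr (by omega) hq).trans hqv)
  have h2 : (l.drop (l.idxOf c + 1)).idxOf c ≤ q - (l.idxOf c + 1) :=
    sock_indexOf_le hd hv2
  unfold secondIdx
  omega

theorem sock_secondIdx_spec [DecidableEq Γ] {l : List Γ} {c : Γ} (h : 2 ≤ l.count c) :
    ∃ hlt : secondIdx l c < l.length, l[secondIdx l c]'hlt = c := by
  have hmem : c ∈ l := List.count_pos_iff.mp (by omega)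
  have hn : l.idxOf c < l.length := List.idxOf_lt_length_iff.mpr hmem
  have hnv : l[l.idxOf c]'hn = c := List.getElem_idxOf hn
  have hdecomp : l = l.take (l.idxOf c) ++ l[l.idxOf c]'hn :: l.drop (l.idxOf c + 1) := by
    conv_lhs => rw [← List.take_append_drop (l.idxOf c) l]
    rw [List.drop_eq_getElem_cons hn]
  have h0 : (l.take (l.idxOf c)).count c = 0 := by
    rw [List.count_eq_zero]
    intro hc
    rw [List.mem_iff_getElem] at hc
    obtain ⟨m, hm, hmv⟩ := hc
    have hm' : m < l.idxOf c := by
      have h3 := hm; rw [List.length_take] at h3; omega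
    have h4 : l.idxOf c ≤ m :=
      sock_indexOf_le (hm'.trans hn) ((List.getElem_take (xs := l)).symm.trans hmv)
    omega
  have hcount : l.count c
      = (l.take (l.idxOf c)).count c + (l[l.idxOf c]'hn :: l.drop (l.idxOf c + 1)).count c := by
    conv_lhs => rw [hdecomp]
    rw [List.count_append]
  have hcons : (l[l.idxOf c]'hn :: l.drop (l.idxOf c + 1)).count c
      = (l.drop (l.idxOf c + 1)).count c + 1 := by
    rw [List.count_cons]
    simp [hnv]
  have hdc : 0 < (l.drop (l.idxOf c + 1)).count c := by omega
  have hmem2 : c ∈ l.drop (l.idxOf c + 1) := List.count_pos_iff.mp hdc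
  have hi2 : (l.drop (l.idxOf c + 1)).idxOf c < (l.drop (l.idxOf c + 1)).length :=
    List.idxOf_lt_length_iff.mpr hmem2
  have hlen : (l.drop (l.idxOf c + 1)).length = l.length - (l.idxOf c + 1) :=
    List.length_drop
  have hlt : secondIdx l c < l.length := by unfold secondIdx; omega
  refine ⟨hlt, ?_⟩
  have hv : (l.drop (l.idxOf c + 1))[(l.drop (l.idxOf c + 1)).idxOf c]'hi2 = c :=
    List.getElem_idxOf hi2
  exact ((sock_getElem_congr (i := secondIdx l c)
    (j := l.idxOf c + 1 + (l.drop (l.idxOf c + 1)).idxOf c) rfl (by omega)).trans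
    ((List.getElem_drop (xs := l)).symm.trans hv))

theorem sock_eq_indexOf_of_lt_secondIdx [DecidableEq Γ] {l : List Γ} {c : Γ} {t : ℕ}
    (ht : t < l.length) (hv : l[t]'ht = c) (hlt : t < secondIdx l c) : t = l.idxOf c := by
  have h1 : l.idxOf c ≤ t := sock_indexOf_le ht hv
  rcases Nat.eq_or_lt_of_le h1 with h | h
  · exact h.symm
  · exfalso
    have hd : t - (l.idxOf c + 1) < (l.drop (l.idxOf c + 1)).length := by
      rw [List.length_drop]; omega
    have hv2 : (l.drop (l.idxOf c + 1))[t - (l.idxOf c + 1)]'hd = c :=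
      (List.getElem_drop (xs := l)).trans ((sock_getElem_congr (by omega) ht).trans hv)
    have h2 : (l.drop (l.idxOf c + 1)).idxOf c ≤ t - (l.idxOf c + 1) :=
      sock_indexOf_le hd hv2
    unfold secondIdx at hlt
    omega

end SockAuxHelpers

/-- In the setting of Case 3, if `a` is not minimal with respect to `le`, then
`(S, le)` is `b`-decided. -/
theorem statement9 {Γ : Type u} [DecidableEq Γ] (S : List Γ) (le : Γ → Γ → Prop)
    (hpo : IsPartialOrder Γ le) (hred : List.Chain' (· ≠ ·) S)
    (hsimp : SimpleOrder S le)
    (a : Γ) (ha : 2 ≤ S.count a)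
    (haE : ∀ c : Γ, 2 ≤ S.count c → secondIdx S a ≤ secondIdx S c)
    (b : Γ) (hb : S.count b = 1) (hbmin : ∀ x, le x b → x = b)
    (hbE : ∀ c : Γ, S.count c = 1 → (∀ x, le x c → x = c) → S.idxOf b ≤ S.idxOf c)
    (hb1 : S.idxOf a < S.idxOf b) (hb2 : S.idxOf b < secondIdx S a)
    (hanotmin : ∃ w, le w a ∧ w ≠ a) :
    DecidedBy S le {b} := by
  by_cases hfs : PairFootSortable S le
  swap
  · exact Or.inl hfs
  obtain ⟨le2, hlin, hext, hnb⟩ := hfs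
  haveI : IsLinearOrder Γ le2 := hlin
  refine Or.inr ⟨fun x y => x = b ∨ (y ≠ b ∧ le2 x y), ?_, ?_,
    ⟨b, Set.mem_singleton b, fun x => Or.inl rfl⟩, ?_⟩
  · refine { refl := ?_, trans := ?_, antisymm := ?_, total := ?_ }
    · intro x
      by_cases hx : x = b
      · exact Or.inl hx
      · exact Or.inr ⟨hx, refl_of le2 x⟩
    · intro x y z hxy hyz
      rcases hxy with hx | ⟨hy, h1⟩
      · exact Or.inl hx
      · rcases hyz with hy' | ⟨hz, h2⟩
        · exact absurd hy' hy
        · exact Or.inr ⟨hz, trans_of le2 h1 h2⟩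
    · intro x y hxy hyx
      rcases hxy with hx | ⟨hy, h1⟩
      · rcases hyx with hy2 | ⟨hx2, h2⟩
        · exact hx.trans hy2.symm
        · exact absurd hx hx2
      · rcases hyx with hy2 | ⟨hx2, h2⟩
        · exact absurd hy2 hy
        · exact antisymm_of le2 h1 h2
    · intro x y
      by_cases hx : x = b
      · exact Or.inl (Or.inl hx)
      · by_cases hy : y = b
        · exact Or.inr (Or.inl hy)
        · rcases total_of le2 x y with h | h
          · exact Or.inl (Or.inr ⟨hy, h⟩)
          · exact Or.inr (Or.inr ⟨hx, h⟩)
  · intro x y h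
    by_cases hx : x = b
    · exact Or.inl hx
    · refine Or.inr ⟨fun hyb => hx (hbmin x (hyb ▸ h)), hext x y h⟩
  · intro p q r hpq hpqne hqr hqrne hsub
    rcases hqr with hqb | ⟨hrb, hqr2⟩
    · rcases hpq with h | ⟨hq, _⟩
      · exact hpqne (h.trans hqb.symm)
      · exact hq hqb
    rcases hpq with hpb | ⟨hqb, hpq2⟩
    swap
    · exact hnb p q r hpq2 hpqne hqr2 hqrne hsub
    rw [hpb] at hsub
    obtain ⟨k, hkS, hiff⟩ := hsimp
    obtain ⟨i, j, t, hij, hjt, ht, hqv, hrv, hbv⟩ := sock_sublist_triple_exists hsub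
    have hbS : b ∈ S := List.count_pos_iff.mp (by rw [hb]; omega)
    have hibS : S.idxOf b < S.length := List.idxOf_lt_length_iff.mpr hbS
    have hibv : S[S.idxOf b]'hibS = b := List.getElem_idxOf hibS
    have htib : t = S.idxOf b := by
      have h1 : S.idxOf b ≤ t := sock_indexOf_le ht hbv
      rcases Nat.eq_or_lt_of_le h1 with h | h
      · exact h.symm
      · exfalso
        have h2 := sock_two_le_count h ht hibv hbv
        omega
    have hjib : j < S.idxOf b := by omega
    obtain ⟨hsaS, hsav⟩ := sock_secondIdx_spec ha
    have hiasa : S.idxOf a < secondIdx S a := by unfold secondIdx; omega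
    have hkill : ∀ (c : Γ) (p1 p2 : ℕ) (h12 : p1 < p2) (h2 : p2 < S.length),
        S[p1]'(h12.trans h2) = c → S[p2]'h2 = c → secondIdx S a ≤ p2 := by
      intro c p1 p2 h12 h2 hv1 hv2
      exact (haE c (sock_two_le_count h12 h2 hv1 hv2)).trans (sock_secondIdx_le h12 h2 hv1 hv2)
    have hgap : ∀ (t' : ℕ) (ht' : t' < S.length), S[t']'ht' = a → t' < secondIdx S a →
        t' = S.idxOf a := fun t' ht' hv hlt => sock_eq_indexOf_of_lt_secondIdx ht' hv hlt
    have hTk : (S.take k).length = k := by rw [List.length_take]; omega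
    rcases Nat.lt_or_ge j k with hjk | hjk
    · have hsub2 : [q, r] <+ S.take k :=
        sock_pair_sublist (l := S.take k) (i := i) (j := j) hij (by omega)
          ((List.getElem_take (xs := S)).trans hqv) ((List.getElem_take (xs := S)).trans hrv)
      have hlerq : le r q := (hiff q r).mpr (Or.inr hsub2)
      exact hqrne (antisymm_of le2 hqr2 (hext _ _ hlerq))
    · obtain ⟨w, hw, hwa⟩ := hanotmin
      have hk2 : S.idxOf a + 2 ≤ k := by
        rcases (hiff a w).mp hw with h | h
        · exact absurd h.symm hwa
        · obtain ⟨p1, p2, h12, h2, hv1, hv2⟩ := sock_sublist_pair_exists h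
          have h2k : p2 < k := by omega
          have hv1' : S[p1]'(by omega) = a := (List.getElem_take (xs := S)).symm.trans hv1
          have hp1 : p1 = S.idxOf a := hgap p1 (by omega) hv1' (by omega)
          omega
      have hk1S : k - 1 < S.length := by omega
      set m : Γ := S[k-1]'hk1S with hmdef
      have hma_ne : m ≠ a := by
        intro h
        have h3 : k - 1 = S.idxOf a := hgap (k-1) hk1S (hmdef.symm.trans h) (by omega)
        omega
      have hiaS : S.idxOf a < S.length := by omega
      have hiav : S[S.idxOf a]'hiaS = a := List.getElem_idxOf hiaS
      have hsubam : [a, m] <+ S.take k :=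
        sock_pair_sublist (l := S.take k) (i := S.idxOf a) (j := k-1) (by omega) (by omega)
          ((List.getElem_take (xs := S)).trans hiav) ((List.getElem_take (xs := S)).trans hmdef.symm)
      have hm_a : le2 m a := hext _ _ ((hiff a m).mpr (Or.inr hsubam))
      have hmmin : ∀ z, le z m → z = m := by
        intro z hz
        rcases (hiff m z).mp hz with h | h
        · exact h.symm
        · exfalso
          obtain ⟨p1, p2, h12, h2, hv1, hv2⟩ := sock_sublist_pair_exists h
          have hv1' : S[p1]'(by omega) = m := (List.getElem_take (xs := S)).symm.trans hv1
          have h3 : secondIdx S a ≤ k - 1 := hkill m p1 (k-1) (by omega) hk1S hv1' hmdef.symm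
          omega
      have hmc : 2 ≤ S.count m := by
        rcases Nat.lt_or_ge (S.count m) 2 with h | h
        · exfalso
          have h1 : 0 < S.count m := List.count_pos_iff.mpr (by rw [hmdef]; exact List.getElem_mem hk1S)
          have h2 := hbE m (by omega) hmmin
          have h3 : S.idxOf m ≤ k - 1 := sock_indexOf_le hk1S hmdef.symm
          omega
        · exact h
      obtain ⟨hpmS, hpmv⟩ := sock_secondIdx_spec hmc
      have hsapm : secondIdx S a < secondIdx S m := by
        have h1 := haE m hmc
        rcases Nat.eq_or_lt_of_le h1 with h | h
        · exact absurd ((hsav.symm.trans (sock_getElem_congr h hpmS)).trans hpmv).symm hma_ne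
        · exact h
      have hjS : j < S.length := by omega
      have hra : r ≠ a := by
        intro h
        have h3 : j = S.idxOf a := hgap j hjS (hrv.trans h) (by omega)
        omega
      have hrm : r ≠ m := by
        intro h
        have h3 : secondIdx S a ≤ j := hkill m (k-1) j (by omega) hjS hmdef.symm (hrv.trans h)
        omega
      have hrmin : ∀ z, le z r → z = r := by
        intro z hz
        rcases (hiff r z).mp hz with h | h
        · exact h.symm
        · exfalso
          obtain ⟨p1, p2, h12, h2, hv1, hv2⟩ := sock_sublist_pair_exists h
          have hv1' : S[p1]'(by omega) = r := (List.getElem_take (xs := S)).symm.trans hv1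
          have h3 : secondIdx S a ≤ j := hkill r p1 j (by omega) hjS hv1' hrv
          omega
      have hrc : 2 ≤ S.count r := by
        rcases Nat.lt_or_ge (S.count r) 2 with h | h
        · exfalso
          have h1 : 0 < S.count r := List.count_pos_iff.mpr (by rw [← hrv]; exact List.getElem_mem hjS)
          have h2 := hbE r (by omega) hrmin
          have h3 : S.idxOf r ≤ j := sock_indexOf_le hjS hrv
          omega
        · exact h
      obtain ⟨hprS, hprv⟩ := sock_secondIdx_spec hrc
      have hsapr : secondIdx S a < secondIdx S r := by
        have h1 := haE r hrc
        rcases Nat.eq_or_lt_of_le h1 with h | h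
        · exact absurd ((hsav.symm.trans (sock_getElem_congr h hprS)).trans hprv).symm hra
        · exact h
      have hr_a : le2 r a := by
        rcases total_of le2 a r with h | h
        · exfalso
          exact hnb m a r hm_a hma_ne h (Ne.symm hra)
            (sock_triple_sublist (l := S) (i := S.idxOf a) (j := j) (t := secondIdx S m)
              (by omega) (by omega) hpmS hiav hrv hpmv)
        · exact h
      have hr_m : le2 r m := by
        rcases total_of le2 m r with h | h
        · exfalso
          exact hnb m r a h (Ne.symm hrm) hr_a hra
            (sock_triple_sublist (l := S) (i := j) (j := secondIdx S a) (t := secondIdx S m)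
              (by omega) hsapm hpmS hrv hsav hpmv)
        · exact h
      rcases Nat.lt_or_ge i k with hik | hik
      · have hm_q : le2 m q := by
          rcases Nat.eq_or_lt_of_le (by omega : i ≤ k - 1) with h | h
          · have hmq : m = q := hmdef.trans ((sock_getElem_congr h.symm (by omega)).trans hqv)
            rw [hmq]; exact refl_of le2 q
          · have hsubqm : [q, m] <+ S.take k :=
              sock_pair_sublist (l := S.take k) (i := i) (j := k-1) h (by omega)
                ((List.getElem_take (xs := S)).trans hqv) ((List.getElem_take (xs := S)).trans hmdef.symm)
            exact hext _ _ ((hiff q m).mpr (Or.inr hsubqm))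
        have hm_r : le2 m r := trans_of le2 hm_q hqr2
        exact hrm (antisymm_of le2 hr_m hm_r)
      · have hiS : i < S.length := by omega
        have hqa : q ≠ a := by
          intro h
          have h3 : i = S.idxOf a := hgap i hiS (hqv.trans h) (by omega)
          omega
        have hqmin : ∀ z, le z q → z = q := by
          intro z hz
          rcases (hiff q z).mp hz with h | h
          · exact h.symm
          · exfalso
            obtain ⟨p1, p2, h12, h2, hv1, hv2⟩ := sock_sublist_pair_exists h
            have hv1' : S[p1]'(by omega) = q := (List.getElem_take (xs := S)).symm.trans hv1
            have h3 : secondIdx S a ≤ i := hkill q p1 i (by omega) hiS hv1' hqv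
            omega
        have hqc : 2 ≤ S.count q := by
          rcases Nat.lt_or_ge (S.count q) 2 with h | h
          · exfalso
            have h1 : 0 < S.count q := List.count_pos_iff.mpr (by rw [← hqv]; exact List.getElem_mem hiS)
            have h2 := hbE q (by omega) hqmin
            have h3 : S.idxOf q ≤ i := sock_indexOf_le hiS hqv
            omega
          · exact h
        obtain ⟨hpqS, hpqv⟩ := sock_secondIdx_spec hqc
        have hsapq : secondIdx S a < secondIdx S q := by
          have h1 := haE q hqc
          rcases Nat.eq_or_lt_of_le h1 with h | h
          · exact absurd ((hsav.symm.trans (sock_getElem_congr h hpqS)).trans hpqv).symm hqa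
          · exact h
        exact hnb q r a hqr2 hqrne hr_a hra
          (sock_triple_sublist (l := S) (i := j) (j := secondIdx S a) (t := secondIdx S q)
            (by omega) hsapq hpqS hrv hsav hpqv)
end
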